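/- arXiv:1812.01734 — 8 statements merged into one kernel-verified Lean document; each statement's English description precedes it below -/
import Mathlib

section
/- Let Γ ∈ ℝ^{d×d} be symmetric with zero diagonal. For k ∈ {1,…,d}, define Σ^{(k)} ∈ ℝ^{(d-1)×(d-1)} by Σ^{(k)}_{ij} = (Γ_{ik} + Γ_{jk} - Γ_{ij})/2 for i,j ≠ k. Then Γ is strictly conditionally negative definite (aᵀΓa < 0 for all nonzero a with Σᵢ aᵢ = 0) if and only if Σ^{(k)} is strictly positive definite. -/
/-! The vectors `eᵢ - eₖ` (`i ≠ k`) form a basis of the hyperplane `∑ aᵢ = 0`. In this basis the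
quadratic form of `Γ` has Gram matrix `Γᵢⱼ - Γᵢₖ - Γₖⱼ + Γₖₖ`, which by symmetry and the zero
diagonal is `-2 Σ⁽ᵏ⁾`. Hence `Γ` is negative definite on the hyperplane iff `Σ⁽ᵏ⁾` is positive
definite. -/

open Matrix

namespace Matrix

theorem dotProduct_transpose_mul_mul_mulVec {m n R : Type*} [Fintype m] [Fintype n]
    [CommSemiring R] (A : Matrix m m R) (B : Matrix m n R) (x : n → R) :
    x ⬝ᵥ (Bᵀ * A * B) *ᵥ x = (B *ᵥ x) ⬝ᵥ A *ᵥ (B *ᵥ x) := by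
  rw [← mulVec_mulVec, ← mulVec_mulVec, dotProduct_mulVec, vecMul_transpose]

variable {ι : Type*} (R : Type*) [Fintype ι] [DecidableEq ι] [CommRing R]

def diffMatrix (k : ι) : Matrix ι {x // x ≠ k} R :=
  of fun p j => (1 : Matrix ι ι R) p j - (1 : Matrix ι ι R) p k

variable {R}

theorem diffMatrix_mulVec_apply_val (k : ι) (b : {x // x ≠ k} → R) (i : {x // x ≠ k}) :
    (diffMatrix R k *ᵥ b) i = b i := by
  simp [diffMatrix, mulVec, dotProduct, i.2, one_apply, Subtype.val_inj]

theorem sum_diffMatrix_mulVec (k : ι) (b : {x // x ≠ k} → R) :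
    ∑ p, (diffMatrix R k *ᵥ b) p = 0 := by
  simp only [diffMatrix, mulVec, dotProduct, of_apply, sub_mul, Finset.sum_sub_distrib, one_apply,
    ite_mul, one_mul, zero_mul]
  rw [Finset.sum_comm]
  simp

theorem diffMatrix_mulVec_comp_val {k : ι} {a : ι → R} (ha : ∑ p, a p = 0) :
    diffMatrix R k *ᵥ (a ∘ Subtype.val) = a := by
  funext p
  rcases eq_or_ne p k with rfl | hp
  · have hsum := sum_diffMatrix_mulVec p (a ∘ Subtype.val)
    rw [Fintype.sum_eq_add_sum_subtype_ne _ p] at hsum ha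
    simp only [diffMatrix_mulVec_apply_val, Function.comp_apply] at hsum
    linear_combination hsum - ha
  · exact diffMatrix_mulVec_apply_val k _ ⟨p, hp⟩

theorem diffMatrix_mulVec_eq_zero_iff {k : ι} {b : {x // x ≠ k} → R} :
    diffMatrix R k *ᵥ b = 0 ↔ b = 0 := by
  refine ⟨fun h => funext fun i => ?_, fun h => h ▸ mulVec_zero _⟩
  rw [← diffMatrix_mulVec_apply_val k b i, h, Pi.zero_apply, Pi.zero_apply]

theorem forall_sum_eq_zero_iff_forall_diffMatrix_mulVec (k : ι) {P : (ι → R) → Prop} :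
    (∀ a : ι → R, a ≠ 0 → ∑ p, a p = 0 → P a) ↔
      ∀ b : {x // x ≠ k} → R, b ≠ 0 → P (diffMatrix R k *ᵥ b) := by
  refine ⟨fun h b hb => h _ (diffMatrix_mulVec_eq_zero_iff.not.mpr hb) (sum_diffMatrix_mulVec k b),
    fun h a ha hsum => ?_⟩
  rw [← diffMatrix_mulVec_comp_val hsum] at ha ⊢
  exact h _ (diffMatrix_mulVec_eq_zero_iff.not.mp ha)

theorem transpose_diffMatrix_mul_mul_diffMatrix (k : ι) (Γ : Matrix ι ι R) :
    (diffMatrix R k)ᵀ * Γ * diffMatrix R k =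
      of fun i j : {x // x ≠ k} => Γ i j - Γ i k - Γ k j + Γ k k := by
  ext i j
  simp only [diffMatrix, one_apply, mul_apply, transpose_apply, of_apply, sub_mul, ite_mul,
    one_mul, zero_mul, Finset.sum_sub_distrib, Finset.sum_ite_eq', Finset.mem_univ, ↓reduceIte,
    mul_sub, mul_ite, mul_one, mul_zero]
  ring

end Matrix

/-- A symmetric matrix `Γ` with zero diagonal is strictly
conditionally negative definite iff `Σ^{(k)}` with entries
`(Γ_{ik}+Γ_{jk}-Γ_{ij})/2`, `i,j ≠ k`, is strictly positive definite. -/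
theorem scnd_iff_sigma_posdef (d : ℕ) (Γ : Matrix (Fin d) (Fin d) ℝ)
    (hsym : Γ.IsSymm) (hdiag : ∀ i, Γ i i = 0) (k : Fin d) :
    (∀ a : Fin d → ℝ, a ≠ 0 → ∑ i, a i = 0 → a ⬝ᵥ Γ.mulVec a < 0) ↔
      (Matrix.of fun i j : {x : Fin d // x ≠ k} =>
        (Γ i.1 k + Γ j.1 k - Γ i.1 j.1) / 2).PosDef := by
  set S := Matrix.of fun i j : {x : Fin d // x ≠ k} => (Γ i.1 k + Γ j.1 k - Γ i.1 j.1) / 2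
  have hS : S = -(1 / 2 : ℝ) • ((diffMatrix ℝ k)ᵀ * Γ * diffMatrix ℝ k) := by
    ext i j
    simp only [S, transpose_diffMatrix_mul_mul_diffMatrix, of_apply, Matrix.smul_apply,
      smul_eq_mul, hsym.apply k j, hdiag, add_zero]
    ring
  have hherm : S.IsHermitian := by
    ext i j
    simp [S, hsym.apply i.1 j.1, add_comm]
  rw [forall_sum_eq_zero_iff_forall_diffMatrix_mulVec k, posDef_iff_dotProduct_mulVec,
    and_iff_right hherm]
  refine forall₂_congr fun b _ => ?_
  rw [star_trivial, hS, smul_mulVec, dotProduct_smul, dotProduct_transpose_mul_mul_mulVec,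
    smul_eq_mul]
  constructor <;> intro h <;> linarith
end

section
/- For each k ∈ {1,…,d}, the map φ_k : Γ ↦ ((Γ_{ik}+Γ_{jk}-Γ_{ij})/2)_{i,j≠k} is a bijection from the set of strictly conditionally negative definite symmetric matrices with zero diagonal and nonnegative entries onto the set of strictly positive definite (d-1)×(d-1) covariance matrices indexed by {1,…,d}\{k}, with inverse Σ^{(k)} ↦ 1·diag(Σ̃^{(k)})ᵀ + diag(Σ̃^{(k)})·1ᵀ - 2Σ̃^{(k)}, where Σ̃^{(k)} is Σ^{(k)} extended by a zero k-th row and column. -/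
/-!
For `a` with `∑ a = 0` the rank-two part `1 diag(Σ̃)ᵀ + diag(Σ̃) 1ᵀ` of `ψ_k(Σ)` is invisible to
the quadratic form, so `aᵀ ψ_k(Σ) a = -2 a'ᵀ Σ a'`, where `a'` is `a` without its `k`-th entry,
and every `a'` comes from exactly one such `a`. Hence `ψ_k` sends positive definite matrices to
strictly conditionally negative definite ones, and, as `ψ_k ∘ φ_k` is the identity on symmetric
matrices with zero diagonal, `φ_k` sends them back. Nonnegativity of the entries comes for free:
testing with `a = e_i - e_j` gives `Γ_ij = -(aᵀ Γ a)/2 > 0` for `i ≠ j`.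
-/

open Matrix

/-- The map `φ_k : Γ ↦ ((Γ_{ik}+Γ_{jk}-Γ_{ij})/2)_{i,j ≠ k}`. -/
noncomputable def phiMap {d : ℕ} (k : Fin d) (Γ : Matrix (Fin d) (Fin d) ℝ) :
    Matrix {x : Fin d // x ≠ k} {x : Fin d // x ≠ k} ℝ :=
  Matrix.of fun i j => (Γ i.1 k + Γ j.1 k - Γ i.1 j.1) / 2

/-- The extension `Σ̃^{(k)}` of `Σ^{(k)}` by a zero `k`-th row and column. -/
noncomputable def tildeExt {d : ℕ} {k : Fin d}
    (S : Matrix {x : Fin d // x ≠ k} {x : Fin d // x ≠ k} ℝ) :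
    Matrix (Fin d) (Fin d) ℝ :=
  Matrix.of fun i j =>
    if hi : i = k then 0 else if hj : j = k then 0 else S ⟨i, hi⟩ ⟨j, hj⟩

/-- The inverse map `ψ_k : Σ^{(k)} ↦ 1 diag(Σ̃^{(k)})ᵀ + diag(Σ̃^{(k)}) 1ᵀ - 2 Σ̃^{(k)}`. -/
noncomputable def psiMap {d : ℕ} (k : Fin d)
    (S : Matrix {x : Fin d // x ≠ k} {x : Fin d // x ≠ k} ℝ) :
    Matrix (Fin d) (Fin d) ℝ :=
  Matrix.of fun i j => tildeExt S i i + tildeExt S j j - 2 * tildeExt S i j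

/-- The set `D_d` of strictly conditionally negative definite symmetric matrices
with zero diagonal and nonnegative entries. -/
def scndSet (d : ℕ) : Set (Matrix (Fin d) (Fin d) ℝ) :=
  {Γ | Γ.IsSymm ∧ (∀ i, Γ i i = 0) ∧ (∀ i j, 0 ≤ Γ i j) ∧
    ∀ a : Fin d → ℝ, a ≠ 0 → ∑ i, a i = 0 → a ⬝ᵥ Γ.mulVec a < 0}

/-- The set `P^k_{d-1}` of strictly positive definite matrices indexed by `{1,…,d} \ {k}`. -/
def posDefSet (d : ℕ) (k : Fin d) :
    Set (Matrix {x : Fin d // x ≠ k} {x : Fin d // x ≠ k} ℝ) :=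
  {S | S.PosDef}

section SumZeroVectors

variable {n : Type*} [Fintype n]

lemma dotProduct_of_add_mulVec_eq_zero (u v a : n → ℝ) (ha : ∑ i, a i = 0) :
    a ⬝ᵥ (of fun i j => u i + v j) *ᵥ a = 0 := by
  simp only [dotProduct, mulVec, of_apply, add_mul, Finset.sum_add_distrib, mul_add,
    ← Finset.mul_sum, ← Finset.sum_mul, ha]
  simp

lemma dotProduct_single_sub_single_mulVec [DecidableEq n] (M : Matrix n n ℝ) (i j : n) :
    (Pi.single i 1 - Pi.single j 1) ⬝ᵥ M *ᵥ (Pi.single i 1 - Pi.single j 1) =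
      M i i - M i j - M j i + M j j := by
  simp only [mulVec_sub, mulVec_single_one, dotProduct_sub, sub_dotProduct, single_dotProduct,
    one_mul, col_apply]
  ring

lemma apply_nonneg_of_strictCondNeg [DecidableEq n] {M : Matrix n n ℝ} (hsymm : M.IsSymm)
    (hdiag : ∀ i, M i i = 0)
    (hneg : ∀ a : n → ℝ, a ≠ 0 → ∑ i, a i = 0 → a ⬝ᵥ M *ᵥ a < 0) (i j : n) :
    0 ≤ M i j := by
  rcases eq_or_ne i j with rfl | hij
  · exact (hdiag i).ge
  have hne : (Pi.single i 1 - Pi.single j 1 : n → ℝ) ≠ 0 := by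
    intro h
    simpa [hij] using congrFun h i
  have hquad := hneg _ hne (by simp [Finset.sum_sub_distrib])
  rw [dotProduct_single_sub_single_mulVec, hdiag, hdiag, hsymm.apply i j] at hquad
  linarith

variable [DecidableEq n] (k : n)

lemma exists_sum_eq_zero_restrict_eq (x : {i // i ≠ k} → ℝ) :
    ∃ a : n → ℝ, ∑ i, a i = 0 ∧ (fun i : {i // i ≠ k} => a i) = x := by
  refine ⟨fun i => if h : i = k then -∑ j, x j else x ⟨i, h⟩, ?_, ?_⟩
  · have (i : {i // i ≠ k}) : i.1 ≠ k := i.2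
    simp [Fintype.sum_eq_add_sum_subtype_ne _ k, this]
  · ext i
    simp [i.2]

lemma eq_zero_of_sum_eq_zero_of_restrict_eq_zero {a : n → ℝ} (ha : ∑ i, a i = 0)
    (h : (fun i : {i // i ≠ k} => a i) = 0) : a = 0 := by
  have hrest (i : {i // i ≠ k}) : a i = 0 := congrFun h i
  have hk : a k = 0 := by
    simpa [Fintype.sum_eq_add_sum_subtype_ne _ k, hrest] using ha
  ext i
  rcases eq_or_ne i k with rfl | hi
  · exact hk
  · exact hrest ⟨i, hi⟩

end SumZeroVectors

section ZeroExtension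

variable {d : ℕ} {k : Fin d}

@[simp]
lemma tildeExt_apply_val (S : Matrix {x : Fin d // x ≠ k} {x : Fin d // x ≠ k} ℝ)
    (i j : {x : Fin d // x ≠ k}) : tildeExt S i j = S i j := by
  simp [tildeExt, i.2, j.2]

@[simp]
lemma tildeExt_self_left (S : Matrix {x : Fin d // x ≠ k} {x : Fin d // x ≠ k} ℝ)
    (j : Fin d) : tildeExt S k j = 0 := by simp [tildeExt]

@[simp]
lemma tildeExt_self_right (S : Matrix {x : Fin d // x ≠ k} {x : Fin d // x ≠ k} ℝ)
    (i : Fin d) : tildeExt S i k = 0 := by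
  by_cases hi : i = k <;> simp [tildeExt, hi]

lemma dotProduct_tildeExt_mulVec (S : Matrix {x : Fin d // x ≠ k} {x : Fin d // x ≠ k} ℝ)
    (a b : Fin d → ℝ) :
    a ⬝ᵥ tildeExt S *ᵥ b = (fun i : {i // i ≠ k} => a i) ⬝ᵥ S *ᵥ (fun i => b i) := by
  simp [dotProduct, mulVec, Fintype.sum_eq_add_sum_subtype_ne _ k]

lemma tildeExt_isSymm {S : Matrix {x : Fin d // x ≠ k} {x : Fin d // x ≠ k} ℝ}
    (hS : S.IsSymm) : (tildeExt S).IsSymm := by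
  ext i j
  by_cases hi : i = k
  · subst hi; simp
  by_cases hj : j = k
  · subst hj; simp
  simpa [tildeExt, hi, hj] using hS.apply ⟨i, hi⟩ ⟨j, hj⟩

lemma phiMap_psiMap (S : Matrix {x : Fin d // x ≠ k} {x : Fin d // x ≠ k} ℝ) :
    phiMap k (psiMap k S) = S := by
  ext i j
  simp [phiMap, psiMap]

lemma psiMap_phiMap {Γ : Matrix (Fin d) (Fin d) ℝ} (hsymm : Γ.IsSymm) (hdiag : ∀ i, Γ i i = 0) :
    psiMap k (phiMap k Γ) = Γ := by
  ext i j
  by_cases hi : i = k <;> by_cases hj : j = k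
  · simp [psiMap, hi, hj, hdiag]
  · simpa [psiMap, phiMap, tildeExt, hi, hj, hdiag] using hsymm.apply k j
  · simp [psiMap, phiMap, tildeExt, hi, hj, hdiag]
  · simp only [psiMap, phiMap, tildeExt, of_apply, dif_neg hi, dif_neg hj, hdiag]
    ring

lemma psiMap_isSymm {S : Matrix {x : Fin d // x ≠ k} {x : Fin d // x ≠ k} ℝ}
    (hS : S.IsSymm) : (psiMap k S).IsSymm := by
  ext i j
  simp only [transpose_apply, psiMap, of_apply]
  rw [(tildeExt_isSymm hS).apply i j]
  ring

lemma dotProduct_psiMap_mulVec (S : Matrix {x : Fin d // x ≠ k} {x : Fin d // x ≠ k} ℝ)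
    {a : Fin d → ℝ} (ha : ∑ i, a i = 0) :
    a ⬝ᵥ psiMap k S *ᵥ a =
      -2 * ((fun i : {i // i ≠ k} => a i) ⬝ᵥ S *ᵥ (fun i => a i)) := by
  have hpsi : psiMap k S =
      (of fun i j => tildeExt S i i + tildeExt S j j) - (2 : ℝ) • tildeExt S := by
    ext i j
    simp [psiMap]
  rw [hpsi, sub_mulVec, dotProduct_sub, dotProduct_of_add_mulVec_eq_zero _ _ _ ha, smul_mulVec,
    dotProduct_smul, dotProduct_tildeExt_mulVec]
  simp

lemma phiMap_posDef {Γ : Matrix (Fin d) (Fin d) ℝ} (hsymm : Γ.IsSymm) (hdiag : ∀ i, Γ i i = 0)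
    (hneg : ∀ a : Fin d → ℝ, a ≠ 0 → ∑ i, a i = 0 → a ⬝ᵥ Γ *ᵥ a < 0) :
    (phiMap k Γ).PosDef := by
  refine .of_dotProduct_mulVec_pos (isHermitian_iff_isSymm.mpr ?_) fun x hx => ?_
  · ext i j
    simp only [transpose_apply, phiMap, of_apply]
    rw [hsymm.apply i.1 j.1]
    ring
  obtain ⟨a, ha, rfl⟩ := exists_sum_eq_zero_restrict_eq k x
  have ha0 : a ≠ 0 := by rintro rfl; exact hx rfl
  have hquad := dotProduct_psiMap_mulVec (phiMap k Γ) ha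
  rw [psiMap_phiMap hsymm hdiag] at hquad
  have hΓa := hneg a ha0 ha
  simp only [star_trivial]
  linarith

lemma psiMap_mem_scndSet {S : Matrix {x : Fin d // x ≠ k} {x : Fin d // x ≠ k} ℝ}
    (hS : S.PosDef) : psiMap k S ∈ scndSet d := by
  have hsymm := psiMap_isSymm (k := k) (isHermitian_iff_isSymm.mp hS.isHermitian)
  have hdiag (i : Fin d) : psiMap k S i i = 0 := by
    simp only [psiMap, of_apply]
    ring
  have hneg (a : Fin d → ℝ) (ha0 : a ≠ 0) (ha : ∑ i, a i = 0) : a ⬝ᵥ psiMap k S *ᵥ a < 0 := by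
    have hx : (fun i : {i // i ≠ k} => a i) ≠ 0 :=
      fun h => ha0 (eq_zero_of_sum_eq_zero_of_restrict_eq_zero k ha h)
    have hSx := hS.dotProduct_mulVec_pos hx
    rw [dotProduct_psiMap_mulVec S ha]
    simp only [star_trivial] at hSx
    linarith
  exact ⟨hsymm, hdiag, apply_nonneg_of_strictCondNeg hsymm hdiag hneg, hneg⟩

end ZeroExtension

/-- `φ_k` is a bijection from `D_d` onto `P^k_{d-1}` with inverse `ψ_k`. -/
theorem phi_bijection (d : ℕ) (k : Fin d) :
    Set.BijOn (phiMap k) (scndSet d) (posDefSet d k) ∧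
    (∀ Γ ∈ scndSet d, psiMap k (phiMap k Γ) = Γ) ∧
    (∀ S ∈ posDefSet d k, phiMap k (psiMap k S) = S) := by
  have hinv : Set.InvOn (psiMap k) (phiMap k) (scndSet d) (posDefSet d k) :=
    ⟨fun _ hΓ => psiMap_phiMap hΓ.1 hΓ.2.1, fun S _ => phiMap_psiMap S⟩
  have hφ : Set.MapsTo (phiMap k) (scndSet d) (posDefSet d k) :=
    fun _ hΓ => phiMap_posDef hΓ.1 hΓ.2.1 hΓ.2.2.2
  have hψ : Set.MapsTo (psiMap k) (posDefSet d k) (scndSet d) :=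
    fun _ hS => psiMap_mem_scndSet hS
  exact ⟨hinv.bijOn hφ hψ, hinv.1, hinv.2⟩
end

section
/- Let Γ be a strictly conditionally negative definite symmetric d×d matrix with zero diagonal. For k ∈ {1,…,d}, let Θ^{(k)} be the inverse of Σ^{(k)} = ((Γ_{ik}+Γ_{jk}-Γ_{ij})/2)_{i,j≠k}. Then for distinct k, k' and indices i, j ∈ {1,…,d}\{k'}: (a) if i,j ≠ k, then Θ^{(k')}_{ij} = Θ^{(k)}_{ij}; (b) if i ≠ k and j = k, then Θ^{(k')}_{ik} = -Σ_{l≠k} Θ^{(k)}_{il}; (c) if i = j = k, then Θ^{(k')}_{kk} = Σ_{l,m≠k} Θ^{(k)}_{lm}. -/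
/-!
Moving the base point from `k` to `k'` is a linear change of coordinates: with
`P l i = δ_{li} - δ_{lk'}` one has `Σ^{(k')} = Pᵀ Σ^{(k)} P`, because the kernel
`(Γ_{ak} + Γ_{bk} - Γ_{ab}) / 2` vanishes on row and column `k`. `P` is invertible with inverse
`Q`, the same matrix with `k` and `k'` exchanged, so `Θ^{(k')} = Q Θ^{(k)} Qᵀ`. The rows of `Q`
are unit vectors, except the row of `k`, which is constantly `-1`; reading off the entries gives
the three relations.
-/

open Matrix

namespace Matrix

variable {l m α : Type*} [Fintype l] [Fintype m] [DecidableEq l] [DecidableEq m] [CommRing α]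

theorem mul_mul_mul_inv_eq_one {A : Matrix m m α} {B : Matrix l m α} {B' : Matrix m l α}
    {C : Matrix m l α} {C' : Matrix l m α} (hB : B * B' = 1) (hC : C * C' = 1)
    (hA : IsUnit A.det) : B * A * C * (C' * A⁻¹ * B') = 1 := by
  calc B * A * C * (C' * A⁻¹ * B') = B * (A * (C * C') * A⁻¹) * B' := by
        simp only [Matrix.mul_assoc]
    _ = 1 := by rw [hC, Matrix.mul_one, mul_nonsing_inv A hA, Matrix.mul_one, hB]

/-- Also for singular `A`: both sides are `0` then. -/
theorem inv_mul_mul_eq {A : Matrix m m α} {B : Matrix l m α} {B' : Matrix m l α}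
    {C : Matrix m l α} {C' : Matrix l m α} (hBB' : B * B' = 1) (hB'B : B' * B = 1)
    (hCC' : C * C' = 1) (hC'C : C' * C = 1) : (B * A * C)⁻¹ = C' * A⁻¹ * B' := by
  by_cases hA : IsUnit A.det
  · exact inv_eq_right_inv (mul_mul_mul_inv_eq_one hBB' hCC' hA)
  · have hBAC : ¬IsUnit (B * A * C).det := fun h => hA <| by
      have hA_eq : B' * (B * A * C) * C' = A := by
        simp only [← Matrix.mul_assoc, hB'B, Matrix.one_mul]
        rw [Matrix.mul_assoc, hCC', Matrix.mul_one]
      rw [← hA_eq]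
      exact isUnit_det_of_right_inverse (mul_mul_mul_inv_eq_one hB'B hC'C h)
    rw [nonsing_inv_apply_not_isUnit _ hA, nonsing_inv_apply_not_isUnit _ hBAC,
      Matrix.mul_zero, Matrix.zero_mul]

end Matrix

namespace HueslerReiss

section Variogram

variable {ι K : Type*} [Field K]

/-- `Σ^{(k)}` is the restriction of this matrix to the indices `≠ k`. -/
def covOfVariogram (Γ : Matrix ι ι K) (k : ι) : Matrix ι ι K :=
  of fun a b => (Γ a k + Γ b k - Γ a b) / 2

variable {Γ : Matrix ι ι K}

theorem covOfVariogram_apply_self_right (hdiag : ∀ i, Γ i i = 0) (k a : ι) :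
    covOfVariogram Γ k a k = 0 := by
  simp [covOfVariogram, hdiag]

theorem covOfVariogram_apply_self_left (hsym : Γ.IsSymm) (hdiag : ∀ i, Γ i i = 0) (k b : ι) :
    covOfVariogram Γ k k b = 0 := by
  simp [covOfVariogram, hdiag, hsym.apply b k]

theorem covOfVariogram_change_base (hsym : Γ.IsSymm) (hdiag : ∀ i, Γ i i = 0) (k k' a b : ι) :
    covOfVariogram Γ k' a b = covOfVariogram Γ k a b - covOfVariogram Γ k a k'
      - covOfVariogram Γ k k' b + covOfVariogram Γ k k' k' := by
  simp only [covOfVariogram, of_apply, hdiag, hsym.apply b k']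
  ring

end Variogram

variable {ι : Type*} [Fintype ι] [DecidableEq ι]

/-- Its columns are `e_i - e_{k'}` in the coordinates `≠ k`, where `e_k = 0`. -/
def basePointChange (R : Type*) [Ring R] (k k' : ι) : Matrix {x // x ≠ k} {x // x ≠ k'} R :=
  of fun l i => (if l.1 = i.1 then 1 else 0) - (if l.1 = k' then 1 else 0)

section BasePointChange

variable {R : Type*} [CommRing R] {k k' : ι} {n : Type*}

theorem sum_basePointChange_mul (i : {x // x ≠ k'}) {f : ι → R} (hf : f k = 0) :
    ∑ l : {x // x ≠ k}, basePointChange R k k' l i * f l = f i - f k' := by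
  have hsum := Fintype.sum_eq_add_sum_subtype_ne
    (fun a => ((if a = i.1 then (1 : R) else 0) - if a = k' then 1 else 0) * f a) k
  rw [hf, mul_zero, zero_add] at hsum
  simp only [basePointChange, of_apply]
  rw [← hsum]
  simp [sub_mul, Finset.sum_sub_distrib]

theorem basePointChange_mul_basePointChange :
    basePointChange R k' k * basePointChange R k k' = (1 : Matrix {x // x ≠ k'} _ R) := by
  ext i j
  rw [mul_apply]
  simp_rw [mul_comm (basePointChange R k' k i _)]
  refine (sum_basePointChange_mul j
    (f := fun a => (if i.1 = a then (1 : R) else 0) - if i.1 = k then 1 else 0) (by simp)).trans ?_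
  simp [one_apply, Subtype.ext_iff, i.2]

theorem transpose_basePointChange_mul_mul_apply {M : Matrix ι ι R}
    (hleft : ∀ b, M k b = 0) (hright : ∀ a, M a k = 0) (i j : {x // x ≠ k'}) :
    ((basePointChange R k k')ᵀ * (M.submatrix (↑) (↑) : Matrix {x // x ≠ k} {x // x ≠ k} R)
      * basePointChange R k k') i j
      = M i j - M i k' - M k' j + M k' k' := by
  have hrow : ∀ m : {x // x ≠ k}, ((basePointChange R k k')ᵀ
      * (M.submatrix (↑) (↑) : Matrix {x // x ≠ k} {x // x ≠ k} R)) i m = M i m - M k' m :=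
    fun m => sum_basePointChange_mul i (f := fun a => M a m) (hleft m)
  rw [mul_apply]
  simp_rw [hrow, mul_comm _ (basePointChange R k k' _ j)]
  rw [sum_basePointChange_mul j (f := fun b => M i b - M k' b) (by simp [hright])]
  ring

theorem inv_transpose_basePointChange_mul_mul (A : Matrix {x // x ≠ k} {x // x ≠ k} R) :
    ((basePointChange R k k')ᵀ * A * basePointChange R k k')⁻¹
      = basePointChange R k' k * A⁻¹ * (basePointChange R k' k)ᵀ := by
  have hPQ := basePointChange_mul_basePointChange (R := R) (k := k') (k' := k)
  have hQP := basePointChange_mul_basePointChange (R := R) (k := k) (k' := k')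
  refine inv_mul_mul_eq ?_ ?_ hPQ hQP
  · rw [← transpose_mul, hQP, transpose_one]
  · rw [← transpose_mul, hPQ, transpose_one]

theorem basePointChange_mul_apply_of_ne (A : Matrix {x // x ≠ k} n R) {i : ι} (hik' : i ≠ k')
    (hik : i ≠ k) (j : n) : (basePointChange R k' k * A) ⟨i, hik'⟩ j = A ⟨i, hik⟩ j := by
  rw [mul_apply, Fintype.sum_eq_single ⟨i, hik⟩]
  · simp [basePointChange, hik]
  · intro l hl
    have : i ≠ l.1 := fun h => hl (Subtype.ext h).symm
    simp [basePointChange, hik, this]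

theorem basePointChange_mul_apply_self (A : Matrix {x // x ≠ k} n R) (hkk' : k ≠ k') (j : n) :
    (basePointChange R k' k * A) ⟨k, hkk'⟩ j = -∑ l, A l j := by
  rw [mul_apply, ← Finset.sum_neg_distrib]
  refine Finset.sum_congr rfl fun l _ => ?_
  simp [basePointChange, Ne.symm l.2]

theorem mul_transpose_basePointChange_apply_of_ne (A : Matrix n {x // x ≠ k} R) {i : ι}
    (hik' : i ≠ k') (hik : i ≠ k) (j : n) :
    (A * (basePointChange R k' k)ᵀ) j ⟨i, hik'⟩ = A j ⟨i, hik⟩ := by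
  rw [← transpose_apply (A * _), transpose_mul, transpose_transpose,
    basePointChange_mul_apply_of_ne _ hik' hik, transpose_apply]

theorem mul_transpose_basePointChange_apply_self (A : Matrix n {x // x ≠ k} R) (hkk' : k ≠ k')
    (j : n) : (A * (basePointChange R k' k)ᵀ) j ⟨k, hkk'⟩ = -∑ l, A j l := by
  rw [← transpose_apply (A * _), transpose_mul, transpose_transpose,
    basePointChange_mul_apply_self _ hkk']
  rfl

end BasePointChange

theorem transpose_basePointChange_mul_covOfVariogram {K : Type*} [Field K] {k k' : ι}
    {Γ : Matrix ι ι K} (hsym : Γ.IsSymm) (hdiag : ∀ i, Γ i i = 0) :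
    (basePointChange K k k')ᵀ
        * ((covOfVariogram Γ k).submatrix (↑) (↑) : Matrix {x // x ≠ k} {x // x ≠ k} K)
        * basePointChange K k k' = (covOfVariogram Γ k').submatrix (↑) (↑) := by
  ext i j
  rw [transpose_basePointChange_mul_mul_apply (covOfVariogram_apply_self_left hsym hdiag k)
    (covOfVariogram_apply_self_right hdiag k), submatrix_apply,
    covOfVariogram_change_base hsym hdiag k k']

end HueslerReiss

open HueslerReiss in
theorem precision_matrix_relations_general (d : ℕ) (Γ : Matrix (Fin d) (Fin d) ℝ)
    (hsym : Γ.IsSymm) (hdiag : ∀ i, Γ i i = 0)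
    (Θ : (k : Fin d) → Matrix {x : Fin d // x ≠ k} {x : Fin d // x ≠ k} ℝ)
    (hΘ : ∀ k, Θ k = (Matrix.of fun i j : {x : Fin d // x ≠ k} =>
      (Γ i.1 k + Γ j.1 k - Γ i.1 j.1) / 2)⁻¹)
    (k k' : Fin d) (hkk' : k ≠ k') :
    (∀ (i j : Fin d) (hik' : i ≠ k') (hjk' : j ≠ k') (hik : i ≠ k) (hjk : j ≠ k),
      Θ k' ⟨i, hik'⟩ ⟨j, hjk'⟩ = Θ k ⟨i, hik⟩ ⟨j, hjk⟩) ∧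
    (∀ (i : Fin d) (hik' : i ≠ k') (hik : i ≠ k),
      Θ k' ⟨i, hik'⟩ ⟨k, hkk'⟩ = -∑ l : {x : Fin d // x ≠ k}, Θ k ⟨i, hik⟩ l) ∧
    (Θ k' ⟨k, hkk'⟩ ⟨k, hkk'⟩ =
      ∑ l : {x : Fin d // x ≠ k}, ∑ m : {x : Fin d // x ≠ k}, Θ k l m) := by
  have hΘcov : ∀ k, Θ k = ((covOfVariogram Γ k).submatrix (↑) (↑))⁻¹ := hΘ
  have hΘk' : Θ k' = basePointChange ℝ k' k * Θ k * (basePointChange ℝ k' k)ᵀ := by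
    rw [hΘcov k', ← transpose_basePointChange_mul_covOfVariogram hsym hdiag,
      inv_transpose_basePointChange_mul_mul, ← hΘcov k]
  refine ⟨fun i j hik' hjk' hik hjk => ?_, fun i hik' hik => ?_, ?_⟩
  · rw [hΘk', mul_transpose_basePointChange_apply_of_ne _ hjk' hjk,
      basePointChange_mul_apply_of_ne _ hik' hik]
  · simp_rw [hΘk', mul_transpose_basePointChange_apply_self _ hkk',
      basePointChange_mul_apply_of_ne _ hik' hik]
  · simp_rw [hΘk', mul_transpose_basePointChange_apply_self _ hkk',
      basePointChange_mul_apply_self _ hkk', Finset.sum_neg_distrib, neg_neg]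
    exact Finset.sum_comm

/-- Relations between the precision matrices
`Θ^{(k)} = (Σ^{(k)})⁻¹` of a Hüsler–Reiss distribution for different base points
`k` and `k'`. -/
theorem precision_matrix_relations (d : ℕ) (Γ : Matrix (Fin d) (Fin d) ℝ)
    (hsym : Γ.IsSymm) (hdiag : ∀ i, Γ i i = 0)
    (hcnd : ∀ a : Fin d → ℝ, a ≠ 0 → ∑ i, a i = 0 → a ⬝ᵥ Γ.mulVec a < 0)
    (Θ : (k : Fin d) → Matrix {x : Fin d // x ≠ k} {x : Fin d // x ≠ k} ℝ)
    (hΘ : ∀ k, Θ k = (Matrix.of fun i j : {x : Fin d // x ≠ k} =>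
      (Γ i.1 k + Γ j.1 k - Γ i.1 j.1) / 2)⁻¹)
    (k k' : Fin d) (hkk' : k ≠ k') :
    (∀ (i j : Fin d) (hik' : i ≠ k') (hjk' : j ≠ k') (hik : i ≠ k) (hjk : j ≠ k),
      Θ k' ⟨i, hik'⟩ ⟨j, hjk'⟩ = Θ k ⟨i, hik⟩ ⟨j, hjk⟩) ∧
    (∀ (i : Fin d) (hik' : i ≠ k') (hik : i ≠ k),
      Θ k' ⟨i, hik'⟩ ⟨k, hkk'⟩ = -∑ l : {x : Fin d // x ≠ k}, Θ k ⟨i, hik⟩ l) ∧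
    (Θ k' ⟨k, hkk'⟩ ⟨k, hkk'⟩ =
      ∑ l : {x : Fin d // x ≠ k}, ∑ m : {x : Fin d // x ≠ k}, Θ k l m) :=
  precision_matrix_relations_general d Γ hsym hdiag Θ hΘ k k' hkk'
end

section
/- Suppose the density of a multivariate Pareto distribution factorizes as f(y) = g(y_{A∪B}) h(y_{B∪C}) on L for disjoint A, C and B = A^c ∩ C^c possibly empty with A ∪ C = {1,…,d}: if B = ∅, i.e., f(y) = f_A(y_A) f_C(y_C) on L^k for some k ∈ A, where f_C(y_C) = λ(y_A, y_C)/λ_A(y_A) for all y_A ∈ L^k_A, then f_C is homogeneous of order -|C|, and no such function can be a probability density on [0,∞)^{|C|}. Concretely: a nonnegative measurable function on (0,∞)^m, m ≥ 1, that is homogeneous of order -m and not identically zero is not integrable on (0,∞)^m. -/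
/-!
Extending `g` by zero, `g • volume` is a finite measure invariant under every dilation
`y ↦ t • y`, `t > 0`: homogeneity of order `-m` exactly compensates the Jacobian `t ^ m`.
Such a measure gives all closed balls around `0` the same mass; letting the radius tend to `0`
and to `∞` shows that it is concentrated at the origin, which lies outside the open orthant.
-/

open MeasureTheory Measure Set Filter Topology Module Metric
open scoped ENNReal

section Dilation

variable {E : Type*} [NormedAddCommGroup E] [NormedSpace ℝ E]

theorem preimage_smul_closedBall_zero_self {r : ℝ} (hr : 0 < r) :
    (r • ·) ⁻¹' closedBall (0 : E) r = closedBall 0 1 := by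
  ext x
  simp [norm_smul, abs_of_pos hr, mul_le_iff_le_one_right hr]

variable [MeasurableSpace E] [BorelSpace E]

theorem measure_univ_eq_measure_zero_of_map_smul_eq
    (ν : Measure E) [IsFiniteMeasure ν] (hν : ∀ t : ℝ, 0 < t → map (t • ·) ν = ν) :
    ν univ = ν {0} := by
  have hball (r : ℝ) (hr : 0 < r) : ν (closedBall 0 r) = ν (closedBall 0 1) := by
    conv_lhs => rw [← hν r hr]
    rw [map_apply (measurable_const_smul r) isClosed_closedBall.measurableSet,
      preimage_smul_closedBall_zero_self hr]
  have hconst {l : Filter ℝ} (hl : ∀ᶠ r in l, 0 < r) :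
      Tendsto (fun r => ν (closedBall 0 r)) l (𝓝 (ν (closedBall 0 1))) :=
    tendsto_const_nhds.congr' (hl.mono fun r hr => (hball r hr).symm)
  have hsmall : Tendsto (fun r => ν (closedBall 0 r)) (𝓝[>] 0) (𝓝 (ν {0})) := by
    refine ((tendsto_measure_cthickening_of_isClosed ⟨1, one_pos, measure_ne_top ν _⟩
      isClosed_singleton).mono_left nhdsWithin_le_nhds).congr' ?_
    filter_upwards [self_mem_nhdsWithin] with r hr
    rw [cthickening_singleton _ hr.le]
  have hlarge : Tendsto (fun r => ν (closedBall 0 r)) atTop (𝓝 (ν univ)) := by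
    have := tendsto_measure_iUnion_atTop (μ := ν)
      fun r r' (h : r ≤ r') => closedBall_subset_closedBall (x := (0 : E)) h
    rwa [iUnion_eq_univ_iff.2 fun x => ⟨‖x‖, by simp⟩] at this
  rw [tendsto_nhds_unique hlarge (hconst (eventually_gt_atTop 0)),
    tendsto_nhds_unique (hconst (l := 𝓝[>] 0) self_mem_nhdsWithin) hsmall]

variable [FiniteDimensional ℝ E]

theorem map_smul_withDensity_of_homogeneous (μ : Measure E) [μ.IsAddHaarMeasure]
    {F : E → ℝ≥0∞} (hF : Measurable F) {t : ℝ} (ht : 0 < t)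
    (hhom : ∀ x, F (t • x) = ENNReal.ofReal (t ^ finrank ℝ E)⁻¹ * F x) :
    map (t • ·) (μ.withDensity F) = μ.withDensity F := by
  have htd : 0 < t ^ finrank ℝ E := by positivity
  set c := ENNReal.ofReal (t ^ finrank ℝ E)
  have hcancel : c * ENNReal.ofReal (t ^ finrank ℝ E)⁻¹ = 1 := by
    rw [← ENNReal.ofReal_mul htd.le, mul_inv_cancel₀ htd.ne', ENNReal.ofReal_one]
  ext s hs
  rw [map_apply (measurable_const_smul t) hs, withDensity_apply _ hs,
    withDensity_apply _ (measurable_const_smul t hs)]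
  calc ∫⁻ x in (t • ·) ⁻¹' s, F x ∂μ
      = ∫⁻ x in (t • ·) ⁻¹' s, c * F (t • x) ∂μ := by
        simp_rw [hhom, ← mul_assoc, hcancel, one_mul]
    _ = c * ∫⁻ x in s, F x ∂(map (t • ·) μ) := by
        rw [lintegral_const_mul' _ _ ENNReal.ofReal_ne_top,
          setLIntegral_map hs hF (measurable_const_smul t)]
    _ = ∫⁻ x in s, F x ∂μ := by
        rw [map_addHaar_smul μ ht.ne', restrict_smul, lintegral_smul_measure, smul_eq_mul,
          abs_of_pos (inv_pos.2 htd), ← mul_assoc, hcancel, one_mul]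

end Dilation

theorem smul_mem_positiveOrthant_iff {ι : Type*} {t : ℝ} (ht : 0 < t) {y : ι → ℝ} :
    t • y ∈ {y : ι → ℝ | ∀ i, 0 < y i} ↔ y ∈ {y : ι → ℝ | ∀ i, 0 < y i} := by
  simp [mul_pos_iff_of_pos_left ht]

theorem indicator_ofReal_smul {E : Type*} [SMul ℝ E] {S : Set E} {g : E → ℝ} {t c : ℝ}
    (hS : ∀ y, t • y ∈ S ↔ y ∈ S) (hc : 0 ≤ c) (hg : ∀ y ∈ S, g (t • y) = c * g y)
    (y : E) :
    S.indicator (fun y => ENNReal.ofReal (g y)) (t • y) =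
      ENNReal.ofReal c * S.indicator (fun y => ENNReal.ofReal (g y)) y := by
  by_cases hy : y ∈ S
  · rw [indicator_of_mem hy, indicator_of_mem ((hS y).2 hy), hg y hy, ENNReal.ofReal_mul hc]
  · rw [indicator_of_notMem hy, indicator_of_notMem (mt (hS y).1 hy), mul_zero]

/-- A nonnegative measurable function on `(0,∞)^m`, `m ≥ 1`, that is
homogeneous of order `-m` and integrable on `(0,∞)^m` must vanish almost
everywhere there (i.e. a nonzero such homogeneous function is not integrable). -/
theorem homogeneous_neg_m_integrable_ae_zero (m : ℕ) (hm : 1 ≤ m)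
    (g : (Fin m → ℝ) → ℝ)
    (hmeas : Measurable g) (hnonneg : ∀ y, 0 ≤ g y)
    (hhom : ∀ t : ℝ, 0 < t → ∀ y : Fin m → ℝ, (∀ i, 0 < y i) →
      g (t • y) = t ^ (-(m : ℝ)) * g y)
    (hint : IntegrableOn g {y : Fin m → ℝ | ∀ i, 0 < y i}) :
    ∀ᵐ y ∂(volume.restrict {y : Fin m → ℝ | ∀ i, 0 < y i}), g y = 0 := by
  set S : Set (Fin m → ℝ) := {y | ∀ i, 0 < y i}
  have hS : MeasurableSet S := by measurability
  set G := S.indicator fun y => ENNReal.ofReal (g y) with hGdef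
  have hG : Measurable G := hmeas.ennreal_ofReal.indicator hS
  have hdilation (t : ℝ) (ht : 0 < t) :
      map (t • ·) (volume.withDensity G) = volume.withDensity G := by
    refine map_smul_withDensity_of_homogeneous volume hG ht fun y => ?_
    rw [finrank_fin_fun, ← Real.rpow_natCast, ← Real.rpow_neg ht.le]
    exact indicator_ofReal_smul (fun _ => smul_mem_positiveOrthant_iff ht)
      (Real.rpow_nonneg ht.le _) (hhom t ht) y
  have : IsFiniteMeasure (volume.withDensity G) :=
    isFiniteMeasure_withDensity ((lintegral_indicator hS _).trans_ne hint.lintegral_lt_top.ne)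
  have hzero : volume.withDensity G {0} = 0 := by
    have : (0 : Fin m → ℝ) ∉ S := fun h => (h ⟨0, hm⟩).false
    rw [withDensity_apply _ (measurableSet_singleton 0)]
    simp [G, this]
  have hGae : G =ᵐ[volume] 0 := by
    rw [← withDensity_eq_zero_iff hG.aemeasurable, ← measure_univ_eq_zero,
      measure_univ_eq_measure_zero_of_map_smul_eq _ hdilation, hzero]
  rw [ae_restrict_iff' hS]
  filter_upwards [hGae] with y hy hyS
  rw [Pi.zero_apply, hGdef, indicator_of_mem hyS, ENNReal.ofReal_eq_zero] at hy
  exact le_antisymm hy (hnonneg y)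
end

section
/- Let T = (V,E) be a tree on V = {1,…,d} rooted at k, with independent positive random variables U_e attached to the edges e ∈ E^k directed away from k, and let P be a standard Pareto random variable (density u^{-2} on (1,∞)) independent of the U_e. Define Y_k = P and Y_i = P · Π_{e ∈ ph(ki)} U_e for i ≠ k, where ph(ki) is the edge set of the unique path from k to i. Then the joint density of (Y_i)_{i∈V} at y with y_k > 1 equals y_k^{-2} Π_{(i,j)∈E^k} y_i^{-1} f_{U_{(i,j)}}(y_j/y_i), where f_{U_e} is the density of U_e. -/
open MeasureTheory
open scoped ENNReal

lemma aux_det_tri {n : ℕ} (M : Matrix (Fin n) (Fin n) ℝ) (w : Fin n → ℕ)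
    (hw : Function.Injective w) (h : ∀ i j, w i < w j → M i j = 0) :
    M.det = ∏ i, M i i := by
  classical
  set σ := Tuple.sort w with hσ
  have hmono : Monotone (w ∘ σ) := Tuple.monotone_sort w
  have hsm : StrictMono (w ∘ σ) :=
    hmono.strictMono_of_injective (hw.comp σ.injective)
  have htri : (M.submatrix σ σ).BlockTriangular OrderDual.toDual := by
    intro i j hij
    exact h _ _ (hsm (show i < j from hij))
  have hdet := Matrix.det_of_lowerTriangular (M.submatrix σ σ) htri
  rw [Matrix.det_submatrix_equiv_self] at hdet
  rw [hdet]
  exact Equiv.prod_comp σ (fun i => M i i)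

lemma aux_map_withDensity {α β : Type*} [MeasurableSpace α] [MeasurableSpace β]
    (μ : Measure α) {F : α → β} (hF : Measurable F) {g : β → ℝ≥0∞}
    (hg : Measurable g) :
    Measure.map F (μ.withDensity (fun a => g (F a))) = (Measure.map F μ).withDensity g := by
  refine Measure.ext fun t ht => ?_
  rw [Measure.map_apply hF ht, withDensity_apply _ (hF ht), withDensity_apply _ ht,
    setLIntegral_map ht hg hF]

set_option maxHeartbeats 2000000 in
/-- For a tree rooted at `k` (encoded by the parent map `par` and
the ancestor sets `anc i`, the nodes on the path from `k` to `i` excluding `k`),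
with independent positive edge variables `U_e` with densities `f i` attached to
the edges `(par i, i)` and an independent standard Pareto variable `P`, the
random vector `Y_k = P`, `Y_i = P ∏_{e ∈ ph(ki)} U_e` has joint density
`y_k⁻² ∏_{(i,j) ∈ E^k} y_i⁻¹ f_{U_{(i,j)}}(y_j / y_i)` at points with `y_k > 1`. -/
theorem tree_extremal_function_representation_density (d : ℕ) (k : Fin d)
    (par : Fin d → Fin d) (anc : Fin d → Finset (Fin d))
    (hpar : par k = k) (hanc0 : anc k = ∅)
    (hanc : ∀ i, i ≠ k →
      anc i = insert i (anc (par i)) ∧ i ∉ anc (par i) ∧ k ∉ anc i)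
    (f : Fin d → ℝ → ℝ)
    (hf_meas : ∀ i, Measurable (f i))
    (hf_nonneg : ∀ i, i ≠ k → ∀ u, 0 ≤ f i u)
    (hf_supp : ∀ i, i ≠ k → ∀ u ≤ (0:ℝ), f i u = 0)
    (hf_cont : ∀ i, i ≠ k → ContinuousOn (f i) (Set.Ioi 0))
    (hf_pos : ∀ i, i ≠ k → ∀ u > (0:ℝ), 0 < f i u)
    (hf_int : ∀ i, i ≠ k → ∫ u in Set.Ioi (0:ℝ), f i u = 1)
    (μ : Measure (Fin d → ℝ))
    (hμ : μ = volume.withDensity (fun ω =>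
      ENNReal.ofReal ((if 1 < ω k then ((ω k) ^ 2)⁻¹ else 0) *
        ∏ i ∈ Finset.univ.erase k, f i (ω i))))
    (T : (Fin d → ℝ) → (Fin d → ℝ))
    (hT : ∀ ω i, T ω i = ω k * ∏ j ∈ anc i, ω j) :
    Measure.map T μ = volume.withDensity (fun y =>
      ENNReal.ofReal (if 1 < y k ∧ ∀ i, 0 < y i then
        ((y k) ^ 2)⁻¹ * ∏ i ∈ Finset.univ.erase k,
          ((y (par i))⁻¹ * f i (y i / y (par i)))
      else 0)) := by
  classical
  -- abbreviations
  set g : (Fin d → ℝ) → ℝ≥0∞ := fun ω =>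
      ENNReal.ofReal ((if 1 < ω k then ((ω k) ^ 2)⁻¹ else 0) *
        ∏ i ∈ Finset.univ.erase k, f i (ω i)) with hg
  set h : (Fin d → ℝ) → ℝ≥0∞ := fun y =>
      ENNReal.ofReal (if 1 < y k ∧ ∀ i, 0 < y i then
        ((y k) ^ 2)⁻¹ * ∏ i ∈ Finset.univ.erase k,
          ((y (par i))⁻¹ * f i (y i / y (par i)))
      else 0) with hh
  set A : Fin d → Finset (Fin d) := fun i => insert k (anc i) with hA
  -- basic tree facts
  have hknotanc : ∀ i, k ∉ anc i := by
    intro i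
    by_cases hi : i = k
    · simp [hi, hanc0]
    · exact (hanc i hi).2.2
  have hself : ∀ i, i ≠ k → i ∈ anc i := by
    intro i hi; rw [(hanc i hi).1]; exact Finset.mem_insert_self _ _
  have hcard : ∀ i, i ≠ k → (anc (par i)).card < (anc i).card := by
    intro i hi
    rw [(hanc i hi).1, Finset.card_insert_of_notMem (hanc i hi).2.1]
    omega
  have hcard0 : ∀ i, (anc i).card = 0 → i = k := by
    intro i hi
    by_contra hcon
    have h1 := hself i hcon
    rw [Finset.card_eq_zero] at hi
    rw [hi] at h1
    exact absurd h1 (Finset.notMem_empty i)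
  have hmem : ∀ n : ℕ, ∀ i, (anc i).card ≤ n → ∀ j ∈ anc i, j ≠ i →
      (anc j).card < (anc i).card := by
    intro n
    induction n with
    | zero =>
      intro i hi j hj _
      rw [Nat.le_zero, Finset.card_eq_zero] at hi
      rw [hi] at hj
      exact absurd hj (Finset.notMem_empty j)
    | succ n ih =>
      intro i hi j hj hne
      by_cases hik : i = k
      · rw [hik, hanc0] at hj; exact absurd hj (Finset.notMem_empty j)
      · obtain ⟨h1, h2, _⟩ := hanc i hik
        rw [h1] at hj
        rcases Finset.mem_insert.1 hj with hcase | hcase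
        · exact absurd hcase hne
        · by_cases hjp : j = par i
          · rw [hjp]; exact hcard i hik
          · have hple : (anc (par i)).card ≤ n := by
              have := hcard i hik; omega
            exact lt_trans (ih (par i) hple j hcase hjp) (hcard i hik)
  -- T as a product over A
  have hTfun : ∀ ω i, T ω i = ∏ j ∈ A i, ω j := by
    intro ω i
    rw [hT ω i]
    simp only [hA]
    rw [Finset.prod_insert (hknotanc i)]
  have hTk : ∀ ω : Fin d → ℝ, T ω k = ω k := by
    intro ω; rw [hT ω k, hanc0]; simp
  have hstep : ∀ (ω : Fin d → ℝ) i, i ≠ k → T ω i = ω i * T ω (par i) := by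
    intro ω i hi
    rw [hTfun ω i, hTfun ω (par i)]
    simp only [hA]
    rw [(hanc i hi).1, Finset.insert_comm, Finset.prod_insert]
    rw [Finset.mem_insert]
    push_neg
    exact ⟨hi, (hanc i hi).2.1⟩
  -- sets
  set s : Set (Fin d → ℝ) := {ω | 1 < ω k ∧ ∀ i, 0 < ω i} with hs
  have hsm : MeasurableSet s := by
    have hseq : s = {ω : Fin d → ℝ | 1 < ω k} ∩ ⋂ i, {ω : Fin d → ℝ | 0 < ω i} := by
      ext ω
      simp only [hs, Set.mem_setOf_eq, Set.mem_inter_iff, Set.mem_iInter]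
    rw [hseq]
    exact (measurableSet_lt measurable_const (measurable_pi_apply k)).inter
      (MeasurableSet.iInter fun i =>
        measurableSet_lt measurable_const (measurable_pi_apply i))
  have htm : MeasurableSet s := hsm
  have hTpos : ∀ ω : Fin d → ℝ, (∀ i, 0 < ω i) → ∀ i, 0 < T ω i := by
    intro ω hω i
    rw [hTfun]
    exact Finset.prod_pos fun j _ => hω j
  have hTmeas : Measurable T := by
    apply measurable_pi_lambda
    intro i
    have heq : (fun ω : Fin d → ℝ => T ω i) = fun ω => ∏ j ∈ A i, ω j :=
      funext fun ω => hTfun ω i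
    rw [heq]
    exact Finset.measurable_prod _ fun j _ => measurable_pi_apply j
  -- the derivative of T
  set L : (Fin d → ℝ) → ((Fin d → ℝ) →L[ℝ] (Fin d → ℝ)) := fun ω =>
    ContinuousLinearMap.pi (fun i => ∑ j ∈ A i,
      (∏ l ∈ (A i).erase j, ω l) • (ContinuousLinearMap.proj j)) with hL
  have hderiv : ∀ ω, HasFDerivAt T (L ω) ω := by
    intro ω
    have heq : T = fun (ω : Fin d → ℝ) (i : Fin d) => ∏ j ∈ A i, ω j :=
      funext fun ω => funext fun i => hTfun ω i
    rw [heq, hL]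
    rw [hasFDerivAt_pi]
    intro i
    exact HasFDerivAt.finset_prod fun j _ => hasFDerivAt_apply j ω
  -- matrix entries of the derivative
  have hMentry : ∀ ω (i j : Fin d),
      LinearMap.toMatrix' ((L ω : (Fin d → ℝ) →L[ℝ] (Fin d → ℝ)) :
        (Fin d → ℝ) →ₗ[ℝ] (Fin d → ℝ)) i j
      = if j ∈ A i then ∏ l ∈ (A i).erase j, ω l else 0 := by
    intro ω i j
    rw [LinearMap.toMatrix'_apply]
    simp only [hL, ContinuousLinearMap.coe_coe, ContinuousLinearMap.pi_apply,
      ContinuousLinearMap.sum_apply, ContinuousLinearMap.smul_apply,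
      ContinuousLinearMap.proj_apply, Pi.single_apply, smul_eq_mul, mul_ite, mul_one, mul_zero]
    exact Finset.sum_ite_eq' (A i) j (fun j' => ∏ l ∈ (A i).erase j', ω l)
  -- triangularity weight
  set w : Fin d → ℕ := fun i => (anc i).card * d + i.val with hw
  have hwinj : Function.Injective w := by
    intro i j hij
    have hi : w i % d = i.val := by
      simp only [hw]
      rw [Nat.mul_add_mod', Nat.mod_eq_of_lt i.isLt]
    have hj : w j % d = j.val := by
      simp only [hw]
      rw [Nat.mul_add_mod', Nat.mod_eq_of_lt j.isLt]
    apply Fin.ext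
    rw [← hi, ← hj, hij]
  have hwle : ∀ i j, j ∈ A i → w j ≤ w i := by
    intro i j hj
    simp only [hA] at hj
    rcases Finset.mem_insert.1 hj with hcase | hcase
    · rw [hcase]
      by_cases hik : i = k
      · rw [hik]
      · have h1 : 1 ≤ (anc i).card := Finset.card_pos.2 ⟨i, hself i hik⟩
        simp only [hw, hanc0, Finset.card_empty, Nat.zero_mul, Nat.zero_add]
        calc (k : Fin d).val ≤ d := le_of_lt k.isLt
        _ = 1 * d := (one_mul d).symm
        _ ≤ (anc i).card * d := Nat.mul_le_mul_right d h1
        _ ≤ (anc i).card * d + i.val := Nat.le_add_right _ _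
    · by_cases hji : j = i
      · rw [hji]
      · have hlt : (anc j).card < (anc i).card := hmem (anc i).card i le_rfl j hcase hji
        simp only [hw]
        apply le_of_lt
        calc (anc j).card * d + j.val < (anc j).card * d + d := by
              have := j.isLt; omega
        _ = ((anc j).card + 1) * d := by ring
        _ ≤ (anc i).card * d := Nat.mul_le_mul_right d (by omega)
        _ ≤ (anc i).card * d + i.val := Nat.le_add_right _ _
  -- determinant of the derivative
  have hdet : ∀ ω : Fin d → ℝ, (∀ i, 0 < ω i) →
      (L ω).det = ∏ i ∈ Finset.univ.erase k, T ω (par i) := by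
    intro ω hω
    have h1 : (L ω).det = LinearMap.det ((L ω : (Fin d → ℝ) →L[ℝ] (Fin d → ℝ)) :
        (Fin d → ℝ) →ₗ[ℝ] (Fin d → ℝ)) := rfl
    rw [h1, ← LinearMap.det_toMatrix']
    rw [aux_det_tri _ w hwinj (fun i j hij => by
      rw [hMentry]
      rw [if_neg]
      intro hmem'
      exact absurd hij (not_lt.2 (hwle i j hmem')))]
    have hkk : LinearMap.toMatrix' ((L ω : (Fin d → ℝ) →L[ℝ] (Fin d → ℝ)) :
        (Fin d → ℝ) →ₗ[ℝ] (Fin d → ℝ)) k k = 1 := by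
      rw [hMentry]
      rw [if_pos (by simp [hA])]
      simp [hA, hanc0]
    have hii : ∀ i, i ≠ k → LinearMap.toMatrix' ((L ω : (Fin d → ℝ) →L[ℝ] (Fin d → ℝ)) :
        (Fin d → ℝ) →ₗ[ℝ] (Fin d → ℝ)) i i = T ω (par i) := by
      intro i hi
      rw [hMentry]
      rw [if_pos (by simp only [hA]; exact Finset.mem_insert_of_mem (hself i hi))]
      rw [hTfun ω (par i)]
      congr 1
      simp only [hA]
      rw [Finset.erase_insert_of_ne (Ne.symm hi), (hanc i hi).1, Finset.erase_insert (hanc i hi).2.1]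
    rw [← Finset.mul_prod_erase Finset.univ _ (Finset.mem_univ k), hkk, one_mul]
    exact Finset.prod_congr rfl fun i hi => hii i (Finset.mem_erase.1 hi).1
  -- injectivity on s
  have hinj : Set.InjOn T s := by
    intro ω hω ω' hω' hTT
    funext i
    by_cases hik : i = k
    · subst hik
      have := congrFun hTT i
      rwa [hTk, hTk] at this
    · have h1 := congrFun hTT i
      have h2 := congrFun hTT (par i)
      rw [hstep ω i hik, hstep ω' i hik, h2] at h1
      have hpos : 0 < T ω' (par i) := hTpos ω' hω'.2 _
      exact mul_right_cancel₀ (ne_of_gt hpos) h1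
  -- image of s
  have himg : T '' s = s := by
    apply Set.Subset.antisymm
    · rintro _ ⟨ω, hω, rfl⟩
      exact ⟨by rw [hTk]; exact hω.1, fun i => hTpos ω hω.2 i⟩
    · intro y hy
      set ω : Fin d → ℝ := fun i => if i = k then y k else y i / y (par i) with hωdef
      have hωpos : ∀ i, 0 < ω i := by
        intro i
        by_cases hik : i = k
        · simp only [hωdef, if_pos hik]
          exact hy.2 k
        · simp only [hωdef, if_neg hik]
          exact div_pos (hy.2 i) (hy.2 (par i))
      have hωk : ω k = y k := by simp [hωdef]
      have key : ∀ n : ℕ, ∀ i, (anc i).card ≤ n → T ω i = y i := by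
        intro n
        induction n with
        | zero =>
          intro i hi
          have : i = k := hcard0 i (Nat.le_zero.1 hi)
          subst this
          rw [hTk, hωk]
        | succ n ih =>
          intro i hi
          by_cases hik : i = k
          · subst hik; rw [hTk, hωk]
          · rw [hstep ω i hik]
            have hpar' : T ω (par i) = y (par i) := by
              apply ih
              have := hcard i hik; omega
            rw [hpar']
            simp only [hωdef, if_neg hik]
            exact div_mul_cancel₀ _ (ne_of_gt (hy.2 (par i)))
      refine ⟨ω, ⟨by rw [hωk]; exact hy.1, hωpos⟩, funext fun i => key (anc i).card i le_rfl⟩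
  -- density pieces
  set D : (Fin d → ℝ) → ℝ≥0∞ := fun ω =>
    ENNReal.ofReal (∏ i ∈ Finset.univ.erase k, T ω (par i)) with hD
  have hDmeas : Measurable D := by
    apply Measurable.ennreal_ofReal
    apply Finset.measurable_prod
    intro i _
    exact (measurable_pi_apply (par i)).comp hTmeas
  have hhmeas : Measurable h := by
    apply Measurable.ennreal_ofReal
    apply Measurable.ite htm
    · apply Measurable.mul
      · exact ((measurable_pi_apply k).pow_const 2).inv
      · apply Finset.measurable_prod
        intro i _
        exact (measurable_pi_apply (par i)).inv.mul
          ((hf_meas i).comp ((measurable_pi_apply i).div (measurable_pi_apply (par i))))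
    · exact measurable_const
  -- g vanishes outside s
  have hgz : ∀ ω, ω ∉ s → g ω = 0 := by
    intro ω hω
    simp only [hg]
    by_cases h1 : 1 < ω k
    · have : ∃ i, ¬ 0 < ω i := by
        by_contra hcon
        push_neg at hcon
        exact hω ⟨h1, hcon⟩
      obtain ⟨i, hi⟩ := this
      have hik : i ≠ k := by
        rintro rfl
        exact hi (lt_trans one_pos h1)
      rw [Finset.prod_eq_zero (Finset.mem_erase.2 ⟨hik, Finset.mem_univ i⟩)
        (hf_supp i hik _ (not_lt.1 hi)), mul_zero, ENNReal.ofReal_zero]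
    · rw [if_neg h1, zero_mul, ENNReal.ofReal_zero]
  have hμ2 : μ = (volume.restrict s).withDensity g := by
    rw [hμ, ← withDensity_indicator hsm]
    congr 1
    funext ω
    by_cases hω : ω ∈ s
    · rw [Set.indicator_of_mem hω]
    · rw [Set.indicator_of_notMem hω, hgz ω hω]
  -- pointwise identity on s
  have key3 : ∀ ω ∈ s, g ω = D ω * h (T ω) := by
    intro ω hω
    obtain ⟨hω1, hω2⟩ := hω
    have hTt : 1 < T ω k ∧ ∀ i, 0 < T ω i :=
      ⟨by rw [hTk]; exact hω1, fun i => hTpos ω hω2 i⟩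
    simp only [hg, hD, hh]
    rw [if_pos hω1, if_pos hTt, hTk]
    have hratio : ∀ i, i ≠ k → T ω i / T ω (par i) = ω i := by
      intro i hi
      rw [hstep ω i hi]
      have := ne_of_gt (hTpos ω hω2 (par i))
      field_simp
    have hprod1 : ∏ i ∈ Finset.univ.erase k, ((T ω (par i))⁻¹ * f i (T ω i / T ω (par i)))
        = ∏ i ∈ Finset.univ.erase k, ((T ω (par i))⁻¹ * f i (ω i)) :=
      Finset.prod_congr rfl fun i hi => by rw [hratio i (Finset.mem_erase.1 hi).1]
    rw [hprod1]
    rw [← ENNReal.ofReal_mul (Finset.prod_nonneg fun i _ => le_of_lt (hTpos ω hω2 (par i)))]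
    congr 1
    rw [Finset.prod_mul_distrib, Finset.prod_inv_distrib]
    have hPne : (∏ i ∈ Finset.univ.erase k, T ω (par i)) ≠ 0 :=
      ne_of_gt (Finset.prod_pos fun i _ => hTpos ω hω2 (par i))
    field_simp
  have hae : (volume.restrict s).withDensity g
      = (volume.restrict s).withDensity (D * fun ω => h (T ω)) :=
    withDensity_congr_ae ((ae_restrict_iff' hsm).2 (Filter.Eventually.of_forall key3))
  have hsplit : (volume.restrict s).withDensity (D * fun ω => h (T ω))
      = ((volume.restrict s).withDensity D).withDensity (fun ω => h (T ω)) :=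
    withDensity_mul (volume.restrict s) hDmeas (hhmeas.comp hTmeas)
  have habs : (volume.restrict s).withDensity D
      = (volume.restrict s).withDensity (fun ω => ENNReal.ofReal |(L ω).det|) :=
    withDensity_congr_ae ((ae_restrict_iff' hsm).2 (Filter.Eventually.of_forall fun ω hω => by
      simp only [hD]
      rw [hdet ω hω.2, abs_of_pos (Finset.prod_pos fun i _ => hTpos ω hω.2 (par i))]))
  have hjac : Measure.map T ((volume.restrict s).withDensity
      (fun ω => ENNReal.ofReal |(L ω).det|)) = volume.restrict (T '' s) :=
    map_withDensity_abs_det_fderiv_eq_addHaar volume hsm.nullMeasurableSet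
      (fun ω _ => (hderiv ω).hasFDerivWithinAt) hinj
  have hind : s.indicator h = h := by
    funext y
    by_cases hy : y ∈ s
    · rw [Set.indicator_of_mem hy]
    · rw [Set.indicator_of_notMem hy]
      simp only [hh]
      rw [if_neg (by exact hy), ENNReal.ofReal_zero]
  rw [hμ2, hae, hsplit, habs,
    aux_map_withDensity _ hTmeas hhmeas, hjac, himg, ← withDensity_indicator htm, hind]
end

section
/- Let λ(y₁,y₂) = y₁^{-2} y₂^{-1} (2πΓ₁₂)^{-1/2} exp(-(log(y₂/y₁) + Γ₁₂/2)² / (2Γ₁₂)) for Γ₁₂ > 0 (bivariate Hüsler–Reiss exponent measure density). Then ∫_{y₁>1} ∫_{y₂>0} λ(y₁,y₂) dy₂ dy₁ = 1 and ∫∫_{max(y₁,y₂)>1} λ(y₁,y₂) dy₁ dy₂ = 2Φ(√Γ₁₂ / 2), where Φ is the standard normal CDF. -/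
open Set MeasureTheory Real ProbabilityTheory

/-!
For fixed `y₁ > 0`, the substitution `y₂ = y₁ exp (√Γ s - Γ / 2)` turns `λ(y₁, y₂) dy₂` into
`y₁⁻² φ(s) ds`, where `φ` is the standard normal density, and `y₂ ≤ y₁` becomes `s ≤ √Γ / 2`.
So the inner integrals over `y₂ > 0` and over `0 < y₂ ≤ y₁` are `y₁⁻²` and `y₁⁻² Φ(√Γ / 2)`,
and `∫_1^∞ y₁⁻² dy₁ = 1`. The region `max(y₁, y₂) > 1` is split along the diagonal into two
pieces, exchanged by the symmetry `λ(y₁, y₂) = λ(y₂, y₁)`, each of mass `Φ(√Γ / 2)`.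
-/

theorem rpow_neg_two_eq_inv_sq {x : ℝ} (hx : 0 ≤ x) : x ^ (-2 : ℝ) = (x ^ 2)⁻¹ := by
  rw [rpow_neg hx]
  norm_cast

theorem integrableOn_inv_sq_Ioi : IntegrableOn (fun x : ℝ => (x ^ 2)⁻¹) (Ioi 1) :=
  (integrableOn_Ioi_rpow_of_lt (by norm_num : (-2 : ℝ) < -1) one_pos).congr_fun
    (fun x hx => rpow_neg_two_eq_inv_sq (zero_le_one.trans (le_of_lt hx))) measurableSet_Ioi

theorem integral_inv_sq_Ioi : ∫ x in Ioi (1 : ℝ), (x ^ 2)⁻¹ = 1 := by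
  rw [← setIntegral_congr_fun measurableSet_Ioi
    fun x hx => rpow_neg_two_eq_inv_sq (zero_le_one.trans (le_of_lt hx)),
    integral_Ioi_rpow_of_lt (by norm_num) one_pos]
  norm_num

theorem setIntegral_fiberwise_of_nonneg {α β : Type*} [MeasurableSpace α] [MeasurableSpace β]
    {μ : Measure α} {ν : Measure β} [SFinite μ] [SFinite ν] {f : α × β → ℝ} (hf : Measurable f)
    {s : Set α} {t : α → Set β} (hs : MeasurableSet s)
    (hR : MeasurableSet {p : α × β | p.1 ∈ s ∧ p.2 ∈ t p.1})
    (hf0 : ∀ x ∈ s, ∀ y ∈ t x, 0 ≤ f (x, y))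
    (hsec : ∀ x ∈ s, IntegrableOn (fun y => f (x, y)) (t x) ν)
    (hint : IntegrableOn (fun x => ∫ y in t x, f (x, y) ∂ν) s μ) :
    IntegrableOn f {p | p.1 ∈ s ∧ p.2 ∈ t p.1} (μ.prod ν) ∧
      ∫ p in {p | p.1 ∈ s ∧ p.2 ∈ t p.1}, f p ∂μ.prod ν = ∫ x in s, ∫ y in t x, f (x, y) ∂ν ∂μ := by
  set R := {p : α × β | p.1 ∈ s ∧ p.2 ∈ t p.1}
  have hfiber : ∀ x, (fun y => R.indicator f (x, y)) =
      s.indicator (fun x => (t x).indicator fun y => f (x, y)) x := by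
    intro x
    by_cases hx : x ∈ s <;> ext y <;> by_cases hy : y ∈ t x <;> simp [R, hx, hy]
  have ht : ∀ x ∈ s, MeasurableSet (t x) := fun x hx => by
    simpa [R, hx] using measurable_prodMk_left (x := x) hR
  have hfiber_integral : ∀ x,
      ∫ y, R.indicator f (x, y) ∂ν = s.indicator (fun x => ∫ y in t x, f (x, y) ∂ν) x := by
    intro x
    rw [hfiber]
    by_cases hx : x ∈ s
    · rw [indicator_of_mem hx, indicator_of_mem hx, integral_indicator (ht x hx)]
    · rw [indicator_of_notMem hx, indicator_of_notMem hx, Pi.zero_def, integral_zero]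
  have hnorm : ∀ p, ‖R.indicator f p‖ = R.indicator f p := fun p =>
    Real.norm_of_nonneg (indicator_nonneg (fun p hp => hf0 p.1 hp.1 p.2 hp.2) p)
  have hInt : Integrable (R.indicator f) (μ.prod ν) := by
    rw [integrable_prod_iff (hf.indicator hR).aestronglyMeasurable]
    refine ⟨ae_of_all _ fun x => ?_, ?_⟩
    · rw [hfiber]
      by_cases hx : x ∈ s
      · rw [indicator_of_mem hx, integrable_indicator_iff (ht x hx)]
        exact hsec x hx
      · rw [indicator_of_notMem hx]
        exact integrable_zero _ _ _
    · simp only [hnorm, hfiber_integral]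
      exact (integrable_indicator_iff hs).2 hint
  refine ⟨(integrable_indicator_iff hR).1 hInt, ?_⟩
  rw [← integral_indicator hR, integral_prod _ hInt]
  simp only [hfiber_integral]
  exact integral_indicator hs

namespace HuslerReiss

noncomputable def density (G y₁ y₂ : ℝ) : ℝ :=
  (y₁ ^ 2)⁻¹ * y₂⁻¹ * (√(2 * π * G))⁻¹ * exp (-(log (y₂ / y₁) + G / 2) ^ 2 / (2 * G))

noncomputable def scale (G y s : ℝ) : ℝ := y * exp (√G * s - G / 2)

section ChangeOfVariables

variable {G y : ℝ}

theorem hasDerivAt_scale (s : ℝ) : HasDerivAt (scale G y) (√G * scale G y s) s := by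
  have h := (((hasDerivAt_id s).const_mul √G).sub_const (G / 2)).exp.const_mul y
  exact h.congr_deriv (by rw [scale, id, mul_one]; ring)

variable (hG : 0 < G) (hy : 0 < y)
include hG hy

theorem strictMono_scale : StrictMono (scale G y) := fun _ _ hst =>
  mul_lt_mul_of_pos_left (exp_lt_exp.2 (by gcongr)) hy

theorem image_scale (S : Set ℝ) :
    scale G y '' S = {x | 0 < x ∧ (log (x / y) + G / 2) / √G ∈ S} := by
  have hc : √G ≠ 0 := (sqrt_pos.2 hG).ne'
  ext x
  constructor
  · rintro ⟨s, hs, rfl⟩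
    refine ⟨mul_pos hy (exp_pos _), ?_⟩
    rwa [scale, mul_div_cancel_left₀ _ hy.ne', log_exp, sub_add_cancel,
      mul_div_cancel_left₀ _ hc]
  · rintro ⟨hx, hs⟩
    refine ⟨_, hs, ?_⟩
    rw [scale, mul_div_cancel₀ _ hc, add_sub_cancel_right, exp_log (div_pos hx hy),
      mul_div_cancel₀ _ hy.ne']

theorem range_scale : scale G y '' univ = Ioi 0 := by
  simp only [image_scale hG hy, mem_univ, and_true]
  rfl

theorem image_scale_Iic : scale G y '' Iic (√G / 2) = Ioc 0 y := by
  have hc : 0 < √G := sqrt_pos.2 hG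
  ext x
  simp only [image_scale hG hy, mem_ofPred_eq, mem_Iic, mem_Ioc, and_congr_right_iff]
  intro hx
  rw [div_le_div_iff₀ hc two_pos, mul_self_sqrt hG.le, ← div_le_one hy,
    ← log_nonpos_iff (div_pos hx hy).le]
  constructor <;> intro h <;> linarith

theorem abs_deriv_mul_density_scale (s : ℝ) :
    |√G * scale G y s| * density G y (scale G y s) = (y ^ 2)⁻¹ * gaussianPDFReal 0 1 s := by
  have hx : 0 < scale G y s := mul_pos hy (exp_pos _)
  have hlog : log (scale G y s / y) + G / 2 = √G * s := by
    rw [scale, mul_div_cancel_left₀ _ hy.ne', log_exp, sub_add_cancel]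
  have hexp : -(√G * s) ^ 2 / (2 * G) = -(s - 0) ^ 2 / (2 * ((1 : NNReal) : ℝ)) := by
    rw [mul_pow, sq_sqrt hG.le]
    field_simp
    simp
  rw [density, hlog, hexp, gaussianPDFReal, abs_of_pos (by positivity),
    sqrt_mul (by positivity) G]
  field_simp
  simp

theorem integral_density_image {S : Set ℝ} (hS : MeasurableSet S) :
    ∫ x in scale G y '' S, density G y x = (y ^ 2)⁻¹ * ∫ s in S, gaussianPDFReal 0 1 s := by
  rw [integral_image_eq_integral_abs_deriv_smul hS
    (fun s _ => (hasDerivAt_scale s).hasDerivWithinAt) (strictMono_scale hG hy).injective.injOn,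
    ← integral_const_mul]
  simp only [smul_eq_mul, abs_deriv_mul_density_scale hG hy]

theorem integrableOn_density_image {S : Set ℝ} (hS : MeasurableSet S) :
    IntegrableOn (density G y) (scale G y '' S) := by
  rw [integrableOn_image_iff_integrableOn_abs_deriv_smul hS
    (fun s _ => (hasDerivAt_scale s).hasDerivWithinAt) (strictMono_scale hG hy).injective.injOn]
  simp only [smul_eq_mul, abs_deriv_mul_density_scale hG hy]
  exact ((integrable_gaussianPDFReal 0 1).const_mul _).integrableOn

theorem integral_density_Ioi : ∫ x in Ioi 0, density G y x = (y ^ 2)⁻¹ := by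
  rw [← range_scale hG hy, integral_density_image hG hy MeasurableSet.univ,
    Measure.restrict_univ, integral_gaussianPDFReal_eq_one 0 one_ne_zero, mul_one]

theorem integral_density_Ioc :
    ∫ x in Ioc 0 y, density G y x = (y ^ 2)⁻¹ * ∫ s in Iic (√G / 2), gaussianPDFReal 0 1 s := by
  rw [← image_scale_Iic hG hy, integral_density_image hG hy measurableSet_Iic]

theorem integrableOn_density_Ioc : IntegrableOn (density G y) (Ioc 0 y) := by
  rw [← image_scale_Iic hG hy]
  exact integrableOn_density_image hG hy measurableSet_Iic

end ChangeOfVariables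

theorem density_comm {G x y : ℝ} (hG : G ≠ 0) (hx : 0 < x) (hy : 0 < y) :
    density G x y = density G y x := by
  have hexp : -(log (x / y) + G / 2) ^ 2 / (2 * G)
      = -(log (y / x) + G / 2) ^ 2 / (2 * G) + log (y / x) := by
    rw [log_div hx.ne' hy.ne', log_div hy.ne' hx.ne']
    field_simp
    ring
  rw [density, density, hexp, exp_add, exp_log (div_pos hy hx)]
  field_simp

theorem measurable_density (G : ℝ) : Measurable fun p : ℝ × ℝ => density G p.1 p.2 := by
  unfold density
  fun_prop

-- Any `t x` a.e. equal to `Ioc 0 x` is allowed, to cover both `Ioc` and `Ioo` below.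
theorem integral_density_below_diagonal {G : ℝ} (hG : 0 < G) {t : ℝ → Set ℝ}
    (ht : ∀ x, t x =ᵐ[volume] Ioc 0 x) (ht_sub : ∀ x, t x ⊆ Ioi 0)
    (hR : MeasurableSet {p : ℝ × ℝ | p.1 ∈ Ioi 1 ∧ p.2 ∈ t p.1}) :
    IntegrableOn (fun p : ℝ × ℝ => density G p.1 p.2) {p | p.1 ∈ Ioi 1 ∧ p.2 ∈ t p.1} ∧
      ∫ p in {p : ℝ × ℝ | p.1 ∈ Ioi 1 ∧ p.2 ∈ t p.1}, density G p.1 p.2 =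
        ∫ s in Iic (√G / 2), gaussianPDFReal 0 1 s := by
  have hfiber : ∀ x ∈ Ioi (1 : ℝ),
      ∫ y in t x, density G x y = (x ^ 2)⁻¹ * ∫ s in Iic (√G / 2), gaussianPDFReal 0 1 s :=
    fun x hx => by
      rw [setIntegral_congr_set (ht x), integral_density_Ioc hG (zero_lt_one.trans hx)]
  have hint_outer : IntegrableOn
      (fun x => (x ^ 2)⁻¹ * ∫ s in Iic (√G / 2), gaussianPDFReal 0 1 s) (Ioi 1) :=
    integrableOn_inv_sq_Ioi.mul_const _
  rw [Measure.volume_eq_prod]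
  obtain ⟨hint, hval⟩ := setIntegral_fiberwise_of_nonneg (measurable_density G) measurableSet_Ioi hR
    (fun x _ y hy => by have : 0 < y := ht_sub x hy; unfold density; positivity)
    (fun x hx => (integrableOn_density_Ioc hG (zero_lt_one.trans hx)).congr_set_ae (ht x))
    (hint_outer.congr_fun (fun x hx => (hfiber x hx).symm) measurableSet_Ioi)
  refine ⟨hint, ?_⟩
  rw [hval, setIntegral_congr_fun measurableSet_Ioi hfiber, integral_mul_const,
    integral_inv_sq_Ioi, one_mul]

theorem integral_density_max_gt_one {G : ℝ} (hG : 0 < G) :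
    ∫ p in {p : ℝ × ℝ | 0 < p.1 ∧ 0 < p.2 ∧ 1 < max p.1 p.2}, density G p.1 p.2 =
      2 * ∫ s in Iic (√G / 2), gaussianPDFReal 0 1 s := by
  set f := fun p : ℝ × ℝ => density G p.1 p.2
  set A := {p : ℝ × ℝ | p.1 ∈ Ioi 1 ∧ p.2 ∈ Ioc 0 p.1}
  set A' := {p : ℝ × ℝ | p.1 ∈ Ioi 1 ∧ p.2 ∈ Ioo 0 p.1}
  have hA_meas : MeasurableSet A := by
    simp only [A, mem_Ioi, mem_Ioc]
    measurability
  have hA'_meas : MeasurableSet A' := by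
    simp only [A', mem_Ioi, mem_Ioo]
    measurability
  have hB_meas : MeasurableSet (Prod.swap ⁻¹' A) := measurable_swap hA_meas
  obtain ⟨hA_int, hA⟩ := integral_density_below_diagonal hG (fun _ => ae_eq_refl _)
    (fun _ => Ioc_subset_Ioi_self) hA_meas
  obtain ⟨hA'_int, hA'⟩ := integral_density_below_diagonal hG (fun _ => Ioo_ae_eq_Ioc)
    (fun _ => Ioo_subset_Ioi_self) hA'_meas
  have hsymm : ∀ p ∈ Prod.swap ⁻¹' A, f p = f p.swap := fun p hp =>
    density_comm hG.ne' hp.2.1 (zero_lt_one.trans hp.1)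
  have hswap : MeasurePreserving (Prod.swap : ℝ × ℝ → ℝ × ℝ) volume volume :=
    Measure.measurePreserving_swap
  have hemb : MeasurableEmbedding (Prod.swap : ℝ × ℝ → ℝ × ℝ) :=
    MeasurableEquiv.prodComm.measurableEmbedding
  have hB_int : IntegrableOn f (Prod.swap ⁻¹' A) :=
    ((hswap.integrableOn_comp_preimage hemb).2 hA_int).congr_fun (fun p hp => (hsymm p hp).symm)
      hB_meas
  have hB : ∫ p in Prod.swap ⁻¹' A, f p = ∫ p in A, f p := by
    rw [setIntegral_congr_fun hB_meas hsymm]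
    exact hswap.setIntegral_preimage_emb hemb f A
  have hsplit : {p : ℝ × ℝ | 0 < p.1 ∧ 0 < p.2 ∧ 1 < max p.1 p.2} = A' ∪ Prod.swap ⁻¹' A := by
    ext ⟨x, y⟩
    simp only [A, A', mem_ofPred_eq, mem_union, mem_preimage, Prod.swap_prod_mk, mem_Ioi, mem_Ioc,
      mem_Ioo, lt_max_iff]
    constructor
    · rintro ⟨hx, hy, h⟩
      rcases lt_or_ge y x with hyx | hxy
      · exact Or.inl ⟨by rcases h with h | h <;> linarith, hy, hyx⟩
      · exact Or.inr ⟨by rcases h with h | h <;> linarith, hx, hxy⟩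
    · rintro (⟨h1, hy, hyx⟩ | ⟨h1, hx, hxy⟩)
      · exact ⟨hy.trans hyx, hy, Or.inl h1⟩
      · exact ⟨hx, hx.trans_le hxy, Or.inr h1⟩
  have hdisj : Disjoint A' (Prod.swap ⁻¹' A) :=
    disjoint_left.2 fun p hA' hB => (hA'.2.2).not_ge hB.2.2
  rw [hsplit, setIntegral_union hdisj hB_meas hA'_int hB_int, hA', hB, hA, two_mul]

end HuslerReiss

open HuslerReiss

/-- The bivariate Hüsler–Reiss exponent measure density has unit
marginal mass on `{y₁ > 1}`, and its mass on `{max(y₁,y₂) > 1}` (the bivariate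
extremal coefficient `Λ(1,1)`) equals `2Φ(√Γ₁₂/2)`. -/
theorem husler_reiss_normalization_and_extremal_coefficient
    (G : ℝ) (hG : 0 < G)
    (lam : ℝ → ℝ → ℝ)
    (hlam : ∀ y₁ y₂ : ℝ, 0 < y₁ → 0 < y₂ → lam y₁ y₂ =
      (y₁ ^ 2)⁻¹ * y₂⁻¹ * (Real.sqrt (2 * π * G))⁻¹ *
        Real.exp (-(Real.log (y₂ / y₁) + G / 2) ^ 2 / (2 * G)))
    (Φ : ℝ → ℝ)
    (hΦ : ∀ x, Φ x = ∫ t in Iic x, (Real.sqrt (2 * π))⁻¹ * Real.exp (-t ^ 2 / 2)) :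
    (∫ y₁ in Ioi (1:ℝ), ∫ y₂ in Ioi (0:ℝ), lam y₁ y₂ = 1) ∧
    (∫ p in {p : ℝ × ℝ | 0 < p.1 ∧ 0 < p.2 ∧ 1 < max p.1 p.2}, lam p.1 p.2 =
      2 * Φ (Real.sqrt G / 2)) := by
  have hlam' : ∀ y₁ y₂ : ℝ, 0 < y₁ → 0 < y₂ → lam y₁ y₂ = density G y₁ y₂ := hlam
  have hΦ' : Φ (√G / 2) = ∫ s in Iic (√G / 2), gaussianPDFReal 0 1 s := by
    simp [hΦ, gaussianPDFReal]
  constructor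
  · calc ∫ y₁ in Ioi (1:ℝ), ∫ y₂ in Ioi (0:ℝ), lam y₁ y₂
        = ∫ y₁ in Ioi (1:ℝ), (y₁ ^ 2)⁻¹ := setIntegral_congr_fun measurableSet_Ioi fun y₁ hy₁ => by
          have hy₁ : 0 < y₁ := zero_lt_one.trans hy₁
          rw [← integral_density_Ioi hG hy₁]
          exact setIntegral_congr_fun measurableSet_Ioi fun y₂ hy₂ => hlam' y₁ y₂ hy₁ hy₂
      _ = 1 := integral_inv_sq_Ioi
  · have hS : MeasurableSet {p : ℝ × ℝ | 0 < p.1 ∧ 0 < p.2 ∧ 1 < max p.1 p.2} := by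
      measurability
    rw [setIntegral_congr_fun hS fun p hp => hlam' p.1 p.2 hp.1 hp.2.1,
      integral_density_max_gt_one hG, hΦ']
end

section
/- Let λ_C, C ranging over the cliques of a connected tree T = (V,E) on V = {1,…,d} with all cliques of size 2, be positive continuous bivariate exponent measure densities (homogeneous of order -3 with unit univariate marginals 1/y²). Then λ(y) = Π_{{i,j}∈E} λ_{ij}(y_i,y_j)/(y_i^{-2} y_j^{-2}) · Π_{i∈V} y_i^{-2} satisfies: for every i ∈ V, ∫_{y : y_i > 1} λ(y) dy = 1 (marginal normalization L2), and λ is homogeneous of order -(d+1). -/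
open Set MeasureTheory
open scoped ENNReal

/-!
Root the tree at `r`. Because each `λᵢ` has margins `t⁻²`, the glued density equals
`y_r⁻² ∏_{i ≠ r} λᵢ(y_{par i}, y_i) y_{par i}²`: a root density times, for every other vertex,
the conditional density of its coordinate given its parent's. Integrating out a leaf `c` replaces
its factor by `∫ λ_c(a, b) a² db = 1`, so every vertex off the path from `r` to `k` can be pruned.
Along that path, integrating out the current root `p` against the edge to its child `v` gives
`∫ p⁻² λ_v(p, b) p² dp = b⁻²`, which moves the root to `v`. Once the root reaches `k` only `y_k⁻²`
is left, and its integral over `y_k > 1` is `1`. Homogeneity is read off the formula.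
-/

section Marginal

variable {δ : Type*} [DecidableEq δ] {X : δ → Type*} [∀ i, MeasurableSpace (X i)]
  {μ : ∀ i, Measure (X i)}

theorem lmarginal_mul_of_dependsOn {f g : (∀ i, X i) → ℝ≥0∞} {s : Finset δ}
    (hf : Measurable f) (hg : DependsOn g (↑s)ᶜ) :
    ∫⋯∫⁻_s, (fun x ↦ f x * g x) ∂μ = fun x ↦ (∫⋯∫⁻_s, f ∂μ) x * g x := by
  ext x
  have hgx : ∀ y, g (Function.updateFinset x s y) = g x := fun y ↦
    hg fun i hi ↦ by simp_all [Function.updateFinset]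
  simp only [lmarginal, hgx]
  exact lintegral_mul_const _ (hf.comp measurable_updateFinset)

end Marginal

theorem setLIntegral_ofReal_of_setIntegral_eq {α : Type*} [MeasurableSpace α] {μ : Measure α}
    {s : Set α} {f : α → ℝ} {c : ℝ} (hs : MeasurableSet s) (hf : ∀ x ∈ s, 0 ≤ f x)
    (h : ∫ x in s, f x ∂μ = c) (hc : c ≠ 0) :
    ∫⁻ x in s, ENNReal.ofReal (f x) ∂μ = ENNReal.ofReal c := by
  rw [← h, ofReal_integral_eq_lintegral_ofReal (Integrable.of_integral_ne_zero (h ▸ hc))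
    ((ae_restrict_iff' hs).mpr (ae_of_all _ hf))]

theorem setLIntegral_Ioi_one_inv_sq : ∫⁻ t in Ioi (1 : ℝ), ENNReal.ofReal (t ^ 2)⁻¹ = 1 := by
  have hpow : EqOn (fun t : ℝ ↦ t ^ (-2 : ℝ)) (fun t ↦ (t ^ 2)⁻¹) (Ioi 1) := fun t ht ↦ by
    simp [Real.rpow_neg (zero_lt_one.trans ht).le]
  have hint : ∫ t in Ioi (1 : ℝ), (t ^ 2)⁻¹ = 1 := by
    rw [← setIntegral_congr_fun measurableSet_Ioi hpow,
      integral_Ioi_rpow_of_lt (by norm_num) one_pos]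
    norm_num
  rw [setLIntegral_ofReal_of_setIntegral_eq measurableSet_Ioi (fun t _ ↦ by positivity) hint
    one_ne_zero, ENNReal.ofReal_one]

noncomputable section GluedDensity

def rootDensity (t : ℝ) : ℝ≥0∞ := (Ioi 0).indicator (fun t ↦ ENNReal.ofReal (t ^ 2)⁻¹) t

/-- `f a b / a⁻²`, the density of a child coordinate `b` given its parent coordinate `a`. -/
def condDensity (f : ℝ → ℝ → ℝ) (a b : ℝ) : ℝ≥0∞ :=
  {p : ℝ × ℝ | 0 < p.1 ∧ 0 < p.2}.indicator (fun p ↦ ENNReal.ofReal (f p.1 p.2 * p.1 ^ 2)) (a, b)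

/-- The density of the subtree with root `rt` and edges `(par i, i)`, `i ∈ s`. -/
def gluedDensity {ι : Type*} (lamE : ι → ℝ → ℝ → ℝ) (par : ι → ι) (rt : ι) (s : Finset ι)
    (y : ι → ℝ) : ℝ≥0∞ :=
  rootDensity (y rt) * ∏ i ∈ s, condDensity (lamE i) (y (par i)) (y i)

theorem measurable_rootDensity : Measurable rootDensity :=
  (Measurable.ennreal_ofReal (by fun_prop)).indicator measurableSet_Ioi

theorem measurable_condDensity {f : ℝ → ℝ → ℝ}
    (hf : ContinuousOn (fun p : ℝ × ℝ ↦ f p.1 p.2) {p | 0 < p.1 ∧ 0 < p.2}) :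
    Measurable (fun p : ℝ × ℝ ↦ condDensity f p.1 p.2) := by
  have hQ : IsOpen {p : ℝ × ℝ | 0 < p.1 ∧ 0 < p.2} :=
    (isOpen_lt continuous_const continuous_fst).inter (isOpen_lt continuous_const continuous_snd)
  have hg : ContinuousOn (fun p : ℝ × ℝ ↦ ENNReal.ofReal (f p.1 p.2 * p.1 ^ 2))
      {p | 0 < p.1 ∧ 0 < p.2} :=
    ENNReal.continuous_ofReal.comp_continuousOn (hf.mul (continuous_fst.pow 2).continuousOn)
  have hm := hg.measurable_piecewise (continuousOn_const (c := (0 : ℝ≥0∞))) hQ.measurableSet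
  rw [← Pi.zero_def, piecewise_eq_indicator] at hm
  simpa only [condDensity] using hm

theorem lintegral_condDensity {f : ℝ → ℝ → ℝ} (hf : ∀ a b, 0 < a → 0 < b → 0 ≤ f a b)
    (hm : ∀ a, 0 < a → ∫ b in Ioi 0, f a b = (a ^ 2)⁻¹) (a : ℝ) :
    ∫⁻ b, condDensity f a b = (Ioi 0).indicator 1 a := by
  by_cases ha : 0 < a
  · have hcond : ∀ b, condDensity f a b =
        (Ioi 0).indicator (fun b ↦ ENNReal.ofReal (f a b * a ^ 2)) b := fun b ↦ by
      by_cases hb : 0 < b <;> simp [condDensity, ha, hb]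
    simp_rw [hcond]
    rw [lintegral_indicator measurableSet_Ioi,
      setLIntegral_ofReal_of_setIntegral_eq measurableSet_Ioi
        (fun b hb ↦ mul_nonneg (hf a b ha hb) (sq_nonneg a))
        (by rw [integral_mul_const, hm a ha, inv_mul_cancel₀ (by positivity)]) one_ne_zero]
    simp [ha]
  · simp [condDensity, ha]

theorem lintegral_rootDensity_mul_condDensity {f : ℝ → ℝ → ℝ}
    (hf : ∀ a b, 0 < a → 0 < b → 0 ≤ f a b)
    (hm : ∀ b, 0 < b → ∫ a in Ioi 0, f a b = (b ^ 2)⁻¹) (b : ℝ) :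
    ∫⁻ a, rootDensity a * condDensity f a b = rootDensity b := by
  by_cases hb : 0 < b
  · have hcond : ∀ a, rootDensity a * condDensity f a b =
        (Ioi 0).indicator (fun a ↦ ENNReal.ofReal (f a b)) a := fun a ↦ by
      by_cases ha : 0 < a
      · simp only [rootDensity, condDensity, indicator_of_mem (show a ∈ Ioi 0 from ha),
          indicator_of_mem (show (a, b) ∈ {p : ℝ × ℝ | 0 < p.1 ∧ 0 < p.2} from ⟨ha, hb⟩),
          ← ENNReal.ofReal_mul (inv_nonneg.mpr (sq_nonneg a))]
        field_simp
      · simp [rootDensity, ha]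
    simp_rw [hcond]
    rw [lintegral_indicator measurableSet_Ioi, setLIntegral_ofReal_of_setIntegral_eq
      measurableSet_Ioi (fun a ha ↦ hf a b ha hb) (hm b hb) (by positivity)]
    simp [rootDensity, hb]
  · simp [condDensity, rootDensity, hb]

variable {ι : Type*} {lamE : ι → ℝ → ℝ → ℝ} {par : ι → ι} {rt : ι}
  {s : Finset ι}

theorem measurable_gluedDensity
    (hcont : ∀ i ∈ s, ContinuousOn (fun p : ℝ × ℝ ↦ lamE i p.1 p.2) {p | 0 < p.1 ∧ 0 < p.2}) :
    Measurable (gluedDensity lamE par rt s) :=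
  (measurable_rootDensity.comp (measurable_pi_apply rt)).mul <| Finset.measurable_prod _
    fun i hi ↦ (measurable_condDensity (hcont i hi)).comp (f := fun y : ι → ℝ ↦ (y (par i), y i))
      (by fun_prop)

theorem gluedDensity_ne_top (y : ι → ℝ) : gluedDensity lamE par rt s y ≠ ⊤ := by
  refine ENNReal.mul_ne_top ?_ (ENNReal.prod_ne_top fun i _ ↦ ?_)
  · rw [rootDensity, indicator_apply]
    split_ifs <;> simp
  · by_cases h : (y (par i), y i) ∈ {p : ℝ × ℝ | 0 < p.1 ∧ 0 < p.2} <;> simp [condDensity, h]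

theorem gluedDensity_eq_zero {y : ι → ℝ} {j : ι} (hj : j = rt ∨ j ∈ s) (hy : y j ≤ 0) :
    gluedDensity lamE par rt s y = 0 := by
  rcases hj with rfl | hj
  · simp [gluedDensity, rootDensity, hy.not_gt]
  · refine mul_eq_zero_of_right _ (Finset.prod_eq_zero hj ?_)
    simp [condDensity, hy.not_gt]

variable [DecidableEq ι]

theorem dependsOn_gluedDensity :
    DependsOn (gluedDensity lamE par rt s) ↑(insert rt (s ∪ s.image par)) := by
  intro x y h
  simp only [Finset.coe_insert, Finset.coe_union, Finset.coe_image, mem_insert_iff, mem_union,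
    Finset.mem_coe, mem_image] at h
  simp only [gluedDensity]
  rw [h rt (Or.inl rfl)]
  congr 1
  refine Finset.prod_congr rfl fun i hi ↦ ?_
  rw [h i (Or.inr (Or.inl hi)), h (par i) (Or.inr (Or.inr ⟨i, hi, rfl⟩))]

theorem lmarginal_singleton_gluedDensity_of_leaf {c : ι}
    (hf : ∀ a b, 0 < a → 0 < b → 0 ≤ lamE c a b)
    (hm : ∀ a, 0 < a → ∫ b in Ioi 0, lamE c a b = (a ^ 2)⁻¹)
    (hcont : ContinuousOn (fun p : ℝ × ℝ ↦ lamE c p.1 p.2) {p | 0 < p.1 ∧ 0 < p.2})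
    (hc : c ∈ s) (hcrt : c ≠ rt) (hleaf : ∀ j ∈ s, par j ≠ c) (hpar : par c = rt ∨ par c ∈ s) :
    (∫⋯∫⁻_{c}, gluedDensity lamE par rt s) = gluedDensity lamE par rt (s.erase c) := by
  have hsplit : gluedDensity lamE par rt s = fun y ↦
      condDensity (lamE c) (y (par c)) (y c) * gluedDensity lamE par rt (s.erase c) y := by
    ext y
    simp only [gluedDensity, ← Finset.mul_prod_erase s _ hc]
    ring
  have hdep : DependsOn (gluedDensity lamE par rt (s.erase c)) (↑({c} : Finset ι))ᶜ :=
    dependsOn_gluedDensity.mono fun j hj ↦ by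
      simp only [Finset.coe_insert, Finset.coe_union, Finset.coe_image, mem_insert_iff,
        mem_union, Finset.mem_coe, mem_image, Finset.mem_erase] at hj
      rcases hj with rfl | ⟨hjc, -⟩ | ⟨i, ⟨-, hi⟩, rfl⟩
      · simpa using hcrt.symm
      · simpa using hjc
      · simpa using hleaf i hi
  have hmeas : Measurable fun y : ι → ℝ ↦ condDensity (lamE c) (y (par c)) (y c) :=
    (measurable_condDensity hcont).comp (f := fun y : ι → ℝ ↦ (y (par c), y c)) (by fun_prop)
  rw [hsplit, lmarginal_mul_of_dependsOn hmeas hdep, lmarginal_singleton]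
  ext y
  simp only [Function.update_self, Function.update_of_ne (hleaf c hc),
    lintegral_condDensity hf hm]
  by_cases hp : 0 < y (par c)
  · simp [hp]
  · rw [gluedDensity_eq_zero (hpar.imp id (Finset.mem_erase.mpr ⟨hleaf c hc, ·⟩))
      (not_lt.mp hp), mul_zero]

/-- The vertices of `s \ t` are integrated out leaves first; a vertex of maximal `rank` in `s \ t`
is a leaf of `s`. -/
theorem lmarginal_gluedDensity_sdiff (rank : ι → ℕ) {t : Finset ι}
    (hf : ∀ i ∈ s, ∀ a b, 0 < a → 0 < b → 0 ≤ lamE i a b)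
    (hm : ∀ i ∈ s, ∀ a, 0 < a → ∫ b in Ioi 0, lamE i a b = (a ^ 2)⁻¹)
    (hcont : ∀ i ∈ s, ContinuousOn (fun p : ℝ × ℝ ↦ lamE i p.1 p.2) {p | 0 < p.1 ∧ 0 < p.2})
    (hrt : rt ∉ s) (hrank : ∀ i ∈ s, rank (par i) < rank i)
    (hs : ∀ i ∈ s, par i = rt ∨ par i ∈ s) (ht : ∀ i ∈ t, par i = rt ∨ par i ∈ t)
    (hts : t ⊆ s) :
    (∫⋯∫⁻_(s \ t), gluedDensity lamE par rt s) = gluedDensity lamE par rt t := by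
  induction hn : (s \ t).card generalizing s with
  | zero =>
    obtain rfl : s = t :=
      (Finset.sdiff_eq_empty_iff_subset.mp (Finset.card_eq_zero.mp hn)).antisymm hts
    simp
  | succ n ih =>
    obtain ⟨c, hc, hmax⟩ := (s \ t).exists_max_image rank (Finset.card_pos.mp (by omega))
    obtain ⟨hcs, hct⟩ := Finset.mem_sdiff.mp hc
    have hleaf : ∀ j ∈ s, par j ≠ c := by
      rintro j hj rfl
      have hjt : j ∉ t := fun hjt ↦ (ht j hjt).elim (fun h ↦ hrt (h ▸ hcs)) hct
      exact (hrank j hj).not_ge (hmax j (Finset.mem_sdiff.mpr ⟨hj, hjt⟩))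
    have hcrt : c ≠ rt := fun h ↦ hrt (h ▸ hcs)
    rw [← Finset.insert_erase hc, Finset.insert_eq, lmarginal_union' _ _
      (measurable_gluedDensity hcont)
      (Finset.disjoint_singleton_left.mpr (Finset.notMem_erase c _)),
      lmarginal_singleton_gluedDensity_of_leaf (hf c hcs) (hm c hcs) (hcont c hcs) hcs hcrt
        hleaf (hs c hcs), ← Finset.erase_sdiff_comm]
    refine ih (fun i hi ↦ hf i (Finset.mem_of_mem_erase hi))
      (fun i hi ↦ hm i (Finset.mem_of_mem_erase hi))
      (fun i hi ↦ hcont i (Finset.mem_of_mem_erase hi))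
      (fun h ↦ hrt (Finset.mem_of_mem_erase h))
      (fun i hi ↦ hrank i (Finset.mem_of_mem_erase hi))
      (fun i hi ↦ (hs i (Finset.mem_of_mem_erase hi)).imp_right fun h ↦
        Finset.mem_erase.mpr ⟨hleaf i (Finset.mem_of_mem_erase hi), h⟩)
      (fun i hi ↦ Finset.mem_erase.mpr ⟨fun h ↦ hct (h ▸ hi), hts hi⟩) ?_
    rw [Finset.erase_sdiff_comm, Finset.card_erase_of_mem hc, hn, Nat.add_sub_cancel]

end GluedDensity

section Ancestors

/-- `anc i` is the set of vertices other than `r` on the path from `i` to `r`; together with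
`anc r = ∅` this makes `par` the parent map of a tree rooted at `r`. -/
def IsAncestorFamily {ι : Type*} [DecidableEq ι] (r : ι) (par : ι → ι) (anc : ι → Finset ι) :
    Prop :=
  ∀ i, i ≠ r → anc i = insert i (anc (par i)) ∧ i ∉ anc (par i) ∧ r ∉ anc i

variable {ι : Type*} [DecidableEq ι] {r : ι} {par : ι → ι} {anc : ι → Finset ι}
  {lamE : ι → ℝ → ℝ → ℝ}

theorem card_anc_par_lt (hanc : IsAncestorFamily r par anc) {i : ι} (hi : i ≠ r) :
    (anc (par i)).card < (anc i).card := by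
  rw [(hanc i hi).1, Finset.card_insert_of_notMem (hanc i hi).2.1]
  exact Nat.lt_succ_self _

theorem anc_induction (hanc : IsAncestorFamily r par anc) {P : ι → Prop} (hr : P r)
    (hpar : ∀ i, i ≠ r → P (par i) → P i) (k : ι) : P k := by
  induction hn : (anc k).card using Nat.strong_induction_on generalizing k with
  | _ n ih =>
    by_cases hk : k = r
    · exact hk ▸ hr
    · exact hpar k hk (ih _ (hn ▸ card_anc_par_lt hanc hk) _ rfl)

theorem mem_anc_self (hanc : IsAncestorFamily r par anc) {i : ι} (hi : i ≠ r) : i ∈ anc i :=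
  (hanc i hi).1 ▸ Finset.mem_insert_self _ _

theorem root_notMem_anc (hanc0 : anc r = ∅) (hanc : IsAncestorFamily r par anc) (k : ι) :
    r ∉ anc k := by
  by_cases hk : k = r
  · simp [hk, hanc0]
  · exact (hanc k hk).2.2

theorem par_mem_insert_anc_par (hanc : IsAncestorFamily r par anc) (i : ι) :
    par i ∈ insert r (anc (par i)) := by
  by_cases hp : par i = r
  · exact hp ▸ Finset.mem_insert_self _ _
  · exact Finset.mem_insert_of_mem (mem_anc_self hanc hp)

theorem par_mem_anc (hanc0 : anc r = ∅) (hanc : IsAncestorFamily r par anc) (k : ι) :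
    ∀ i ∈ anc k, par i = r ∨ par i ∈ anc k := by
  refine anc_induction hanc (P := fun k ↦ ∀ i ∈ anc k, par i = r ∨ par i ∈ anc k)
    (by simp [hanc0]) (fun k hk ih i hi ↦ ?_) k
  rw [(hanc k hk).1, Finset.mem_insert] at hi ⊢
  rcases hi with rfl | hi
  · exact (Finset.mem_insert.mp (par_mem_insert_anc_par hanc i)).imp_right Or.inr
  · exact (ih i hi).imp_right Or.inr

theorem lmarginal_gluedDensity_anc (hanc0 : anc r = ∅) (hanc : IsAncestorFamily r par anc)
    (hf : ∀ i, i ≠ r → ∀ a b, 0 < a → 0 < b → 0 ≤ lamE i a b)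
    (hm : ∀ i, i ≠ r → ∀ b, 0 < b → ∫ a in Ioi 0, lamE i a b = (b ^ 2)⁻¹)
    (hcont : ∀ i, i ≠ r →
      ContinuousOn (fun p : ℝ × ℝ ↦ lamE i p.1 p.2) {p | 0 < p.1 ∧ 0 < p.2}) (k : ι) :
    (∫⋯∫⁻_((insert r (anc k)).erase k), gluedDensity lamE par r (anc k)) =
      fun y ↦ rootDensity (y k) := by
  have hcont' : ∀ k, ∀ i ∈ anc k, ContinuousOn (fun p : ℝ × ℝ ↦ lamE i p.1 p.2)
      {p | 0 < p.1 ∧ 0 < p.2} := fun k i hi ↦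
    hcont i fun h ↦ root_notMem_anc hanc0 hanc k (h ▸ hi)
  refine anc_induction hanc (P := fun k ↦ (∫⋯∫⁻_((insert r (anc k)).erase k),
    gluedDensity lamE par r (anc k)) = fun y ↦ rootDensity (y k)) ?_ (fun k hk ih ↦ ?_) k
  · ext y
    simp [hanc0, gluedDensity]
  obtain ⟨hanck, hkp, -⟩ := hanc k hk
  set p := par k
  set T := (insert r (anc p)).erase p
  have hkT : k ∉ insert r (anc p) := by simp [hk, hkp]
  have hindex : (insert r (anc k)).erase k = insert p T := by
    rw [hanck, Finset.insert_comm, Finset.erase_insert hkT,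
      Finset.insert_erase (par_mem_insert_anc_par hanc k)]
  have hsplit : gluedDensity lamE par r (anc k) = fun y ↦
      gluedDensity lamE par r (anc p) y * condDensity (lamE k) (y p) (y k) := by
    ext y
    simp only [gluedDensity, hanck, Finset.prod_insert hkp]
    ring
  have hdep : DependsOn (fun y : ι → ℝ ↦ condDensity (lamE k) (y p) (y k)) (↑T)ᶜ :=
    fun x y h ↦ by
      dsimp only
      rw [h p (by simp [T]), h k (fun hk' ↦ hkT (Finset.mem_of_mem_erase hk'))]
  rw [hindex, Finset.insert_eq, lmarginal_union _ _ (measurable_gluedDensity (hcont' k))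
      (Finset.disjoint_singleton_left.mpr (Finset.notMem_erase p _)),
    hsplit, lmarginal_mul_of_dependsOn (measurable_gluedDensity (hcont' p)) hdep, ih,
    lmarginal_singleton]
  ext y
  have hkp' : k ≠ p := fun h ↦ hkT (h.symm ▸ par_mem_insert_anc_par hanc k)
  simp only [Function.update_self, Function.update_of_ne hkp']
  exact lintegral_rootDensity_mul_condDensity (hf k hk) (hm k hk) (y k)

end Ancestors

theorem measurableSet_pos_and_one_lt {ι : Type*} [Countable ι] (k : ι) :
    MeasurableSet {y : ι → ℝ | (∀ j, 0 < y j) ∧ 1 < y k} := by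
  simp only [ofPred_and, ofPred_forall]
  exact (MeasurableSet.iInter fun j ↦ measurableSet_lt measurable_const
    (measurable_pi_apply j)).inter (measurableSet_lt measurable_const (measurable_pi_apply k))

noncomputable section Normalization

variable {ι : Type*} [Fintype ι] [DecidableEq ι] {r : ι} {par : ι → ι} {anc : ι → Finset ι}
  {lamE : ι → ℝ → ℝ → ℝ}

theorem lmarginal_univ_erase_gluedDensity (hanc0 : anc r = ∅) (hanc : IsAncestorFamily r par anc)
    (hf : ∀ i, i ≠ r → ∀ a b, 0 < a → 0 < b → 0 ≤ lamE i a b)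
    (hm₁ : ∀ i, i ≠ r → ∀ a, 0 < a → ∫ b in Ioi 0, lamE i a b = (a ^ 2)⁻¹)
    (hm₂ : ∀ i, i ≠ r → ∀ b, 0 < b → ∫ a in Ioi 0, lamE i a b = (b ^ 2)⁻¹)
    (hcont : ∀ i, i ≠ r →
      ContinuousOn (fun p : ℝ × ℝ ↦ lamE i p.1 p.2) {p | 0 < p.1 ∧ 0 < p.2}) (k : ι) :
    (∫⋯∫⁻_(Finset.univ.erase k), gluedDensity lamE par r (Finset.univ.erase r)) =
      fun y ↦ rootDensity (y k) := by
  have hrk := root_notMem_anc hanc0 hanc k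
  have hkk : k = r ∨ k ∈ anc k := (em (k = r)).imp_right (mem_anc_self hanc)
  have hindex : Finset.univ.erase k =
      (insert r (anc k)).erase k ∪ (Finset.univ.erase r \ anc k) := by
    ext a
    simp only [Finset.mem_erase, Finset.mem_univ, Finset.mem_union, Finset.mem_insert,
      Finset.mem_sdiff]
    grind
  have hdisj : Disjoint ((insert r (anc k)).erase k) (Finset.univ.erase r \ anc k) := by
    simp only [Finset.disjoint_left, Finset.mem_erase, Finset.mem_insert, Finset.mem_sdiff]
    grind
  rw [hindex, lmarginal_union _ _
      (measurable_gluedDensity fun i hi ↦ hcont i (Finset.ne_of_mem_erase hi)) hdisj,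
    lmarginal_gluedDensity_sdiff (fun i ↦ (anc i).card)
      (fun i hi ↦ hf i (Finset.ne_of_mem_erase hi)) (fun i hi ↦ hm₁ i (Finset.ne_of_mem_erase hi))
      (fun i hi ↦ hcont i (Finset.ne_of_mem_erase hi)) (Finset.notMem_erase r _)
      (fun i hi ↦ card_anc_par_lt hanc (Finset.ne_of_mem_erase hi))
      (fun i _ ↦ (em (par i = r)).imp_right fun h ↦ Finset.mem_erase.mpr ⟨h, Finset.mem_univ _⟩)
      (par_mem_anc hanc0 hanc k)
      (fun i hi ↦ Finset.mem_erase.mpr ⟨fun h ↦ hrk (h ▸ hi), Finset.mem_univ _⟩),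
    lmarginal_gluedDensity_anc hanc0 hanc hf hm₂ hcont k]

theorem lintegral_gluedDensity_mul_indicator (hanc0 : anc r = ∅)
    (hanc : IsAncestorFamily r par anc)
    (hf : ∀ i, i ≠ r → ∀ a b, 0 < a → 0 < b → 0 ≤ lamE i a b)
    (hm₁ : ∀ i, i ≠ r → ∀ a, 0 < a → ∫ b in Ioi 0, lamE i a b = (a ^ 2)⁻¹)
    (hm₂ : ∀ i, i ≠ r → ∀ b, 0 < b → ∫ a in Ioi 0, lamE i a b = (b ^ 2)⁻¹)
    (hcont : ∀ i, i ≠ r →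
      ContinuousOn (fun p : ℝ × ℝ ↦ lamE i p.1 p.2) {p | 0 < p.1 ∧ 0 < p.2}) (k : ι) :
    ∫⁻ y, gluedDensity lamE par r (Finset.univ.erase r) y *
      (Ioi (1 : ℝ)).indicator (1 : ℝ → ℝ≥0∞) (y k) = 1 := by
  have hmeas : Measurable (gluedDensity lamE par r (Finset.univ.erase r)) :=
    measurable_gluedDensity fun i hi ↦ hcont i (Finset.ne_of_mem_erase hi)
  have hmeas' : Measurable fun y : ι → ℝ ↦ gluedDensity lamE par r (Finset.univ.erase r) y *
      (Ioi (1 : ℝ)).indicator (1 : ℝ → ℝ≥0∞) (y k) :=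
    hmeas.mul ((measurable_const.indicator measurableSet_Ioi).comp (measurable_pi_apply k))
  have hdep : DependsOn (fun y : ι → ℝ ↦ (Ioi (1 : ℝ)).indicator (1 : ℝ → ℝ≥0∞) (y k))
      (↑(Finset.univ.erase k))ᶜ := fun x y h ↦ by
    dsimp only
    rw [h k (by simp)]
  have hind : ∀ t : ℝ, rootDensity t * (Ioi (1 : ℝ)).indicator (1 : ℝ → ℝ≥0∞) t =
      (Ioi 1).indicator (fun t ↦ ENNReal.ofReal (t ^ 2)⁻¹) t := fun t ↦ by
    by_cases ht : 1 < t
    · simp [rootDensity, ht, zero_lt_one.trans ht]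
    · simp [ht]
  rw [volume_pi, lintegral_eq_lmarginal_univ 0, lmarginal_erase _ hmeas' (Finset.mem_univ k),
    lmarginal_mul_of_dependsOn hmeas hdep,
    lmarginal_univ_erase_gluedDensity hanc0 hanc hf hm₁ hm₂ hcont k]
  simp only [Function.update_self, hind]
  rw [lintegral_indicator measurableSet_Ioi, setLIntegral_Ioi_one_inv_sq]

/-- The glued density, written as in the statement of the theorem. -/
def treeDensity (lamE : ι → ℝ → ℝ → ℝ) (par : ι → ι) (r : ι) (y : ι → ℝ) : ℝ :=
  (∏ i ∈ Finset.univ.erase r,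
      (lamE i (y (par i)) (y i) / (((y (par i)) ^ 2)⁻¹ * ((y i) ^ 2)⁻¹))) *
    ∏ i, ((y i) ^ 2)⁻¹

theorem treeDensity_eq_toReal_gluedDensity
    (hf : ∀ i, i ≠ r → ∀ a b, 0 < a → 0 < b → 0 ≤ lamE i a b) {y : ι → ℝ} (hy : ∀ j, 0 < y j) :
    treeDensity lamE par r y = (gluedDensity lamE par r (Finset.univ.erase r) y).toReal := by
  have hvertex : ∀ i ∈ Finset.univ.erase r,
      lamE i (y (par i)) (y i) / (((y (par i)) ^ 2)⁻¹ * ((y i) ^ 2)⁻¹) * ((y i) ^ 2)⁻¹ =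
        lamE i (y (par i)) (y i) * y (par i) ^ 2 := fun i _ ↦ by
    have := (hy i).ne'
    have := (hy (par i)).ne'
    field_simp
  have hedge : ∀ i ∈ Finset.univ.erase r, condDensity (lamE i) (y (par i)) (y i) =
      ENNReal.ofReal (lamE i (y (par i)) (y i) * y (par i) ^ 2) := fun i _ ↦ by
    simp [condDensity, hy]
  have hnonneg : ∀ i ∈ Finset.univ.erase r, 0 ≤ lamE i (y (par i)) (y i) * y (par i) ^ 2 :=
    fun i hi ↦ mul_nonneg (hf i (Finset.ne_of_mem_erase hi) _ _ (hy _) (hy _)) (sq_nonneg _)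
  rw [treeDensity, ← Finset.mul_prod_erase Finset.univ _ (Finset.mem_univ r), mul_left_comm,
    ← Finset.prod_mul_distrib, Finset.prod_congr rfl hvertex, gluedDensity,
    Finset.prod_congr rfl hedge, ← ENNReal.ofReal_prod_of_nonneg hnonneg, rootDensity,
    indicator_of_mem (mem_Ioi.mpr (hy r)), ← ENNReal.ofReal_mul (by positivity),
    ENNReal.toReal_ofReal (mul_nonneg (by positivity) (Finset.prod_nonneg hnonneg))]

theorem setIntegral_treeDensity (hanc0 : anc r = ∅) (hanc : IsAncestorFamily r par anc)
    (hf : ∀ i, i ≠ r → ∀ a b, 0 < a → 0 < b → 0 ≤ lamE i a b)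
    (hm₁ : ∀ i, i ≠ r → ∀ a, 0 < a → ∫ b in Ioi 0, lamE i a b = (a ^ 2)⁻¹)
    (hm₂ : ∀ i, i ≠ r → ∀ b, 0 < b → ∫ a in Ioi 0, lamE i a b = (b ^ 2)⁻¹)
    (hcont : ∀ i, i ≠ r →
      ContinuousOn (fun p : ℝ × ℝ ↦ lamE i p.1 p.2) {p | 0 < p.1 ∧ 0 < p.2}) (k : ι) :
    ∫ y in {y : ι → ℝ | (∀ j, 0 < y j) ∧ 1 < y k}, treeDensity lamE par r y = 1 := by
  set Φ := gluedDensity lamE par r (Finset.univ.erase r)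
  set S := {y : ι → ℝ | (∀ j, 0 < y j) ∧ 1 < y k}
  have hS : MeasurableSet S := measurableSet_pos_and_one_lt k
  have hindicator :
      S.indicator Φ = fun y ↦ Φ y * (Ioi (1 : ℝ)).indicator (1 : ℝ → ℝ≥0∞) (y k) := by
    ext y
    by_cases hy : ∀ j, 0 < y j
    · by_cases hk : 1 < y k <;> simp [S, hy, hk]
    · obtain ⟨j, hj⟩ := not_forall.mp hy
      have hΦ : Φ y = 0 := gluedDensity_eq_zero
        ((em (j = r)).imp_right fun h ↦ Finset.mem_erase.mpr ⟨h, Finset.mem_univ _⟩)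
        (not_lt.mp hj)
      rw [indicator_of_notMem (fun h ↦ hy h.1), hΦ, zero_mul]
  calc ∫ y in S, treeDensity lamE par r y = ∫ y in S, (Φ y).toReal :=
        setIntegral_congr_fun hS fun y hy ↦ treeDensity_eq_toReal_gluedDensity hf hy.1
    _ = (∫⁻ y in S, Φ y).toReal :=
        integral_toReal (measurable_gluedDensity fun i hi ↦
          hcont i (Finset.ne_of_mem_erase hi)).aemeasurable
          (ae_of_all _ fun y ↦ (gluedDensity_ne_top y).lt_top)
    _ = 1 := by
        rw [← lintegral_indicator hS, hindicator,
          lintegral_gluedDensity_mul_indicator hanc0 hanc hf hm₁ hm₂ hcont k, ENNReal.toReal_one]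

theorem treeDensity_smul
    (hhom : ∀ i, i ≠ r → ∀ t a b : ℝ, 0 < t → 0 < a → 0 < b →
      lamE i (t * a) (t * b) = (t ^ 3)⁻¹ * lamE i a b)
    {t : ℝ} (ht : 0 < t) {y : ι → ℝ} (hy : ∀ j, 0 < y j) :
    treeDensity lamE par r (t • y) = (t ^ (Fintype.card ι + 1))⁻¹ * treeDensity lamE par r y := by
  have hedge : ∀ i ∈ Finset.univ.erase r,
      lamE i (t * y (par i)) (t * y i) / (((t * y (par i)) ^ 2)⁻¹ * ((t * y i) ^ 2)⁻¹) =
        t * (lamE i (y (par i)) (y i) / (((y (par i)) ^ 2)⁻¹ * ((y i) ^ 2)⁻¹)) := fun i hi ↦ by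
    rw [hhom i (Finset.ne_of_mem_erase hi) t _ _ ht (hy _) (hy _)]
    field_simp
  have hvertex : ∀ i, ((t * y i) ^ 2)⁻¹ = (t ^ 2)⁻¹ * ((y i) ^ 2)⁻¹ := fun i ↦ by
    rw [mul_pow, mul_inv]
  have hcard := Finset.card_erase_add_one (Finset.mem_univ r)
  rw [Finset.card_univ] at hcard
  simp only [treeDensity, Pi.smul_apply, smul_eq_mul]
  rw [Finset.prod_congr rfl hedge, Finset.prod_congr rfl fun i _ ↦ hvertex i,
    Finset.prod_mul_distrib, Finset.prod_mul_distrib, Finset.prod_const, Finset.prod_const,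
    Finset.card_univ, ← hcard, mul_mul_mul_comm]
  congr 1
  set n := (Finset.univ.erase r).card
  rw [inv_pow, show (t ^ 2) ^ (n + 1) = t ^ n * t ^ (n + 1 + 1) by ring, mul_inv, ← mul_assoc,
    mul_inv_cancel₀ (pow_ne_zero _ ht.ne'), one_mul]

end Normalization

theorem tree_glued_exponent_density_valid_general (d : ℕ)
    (r : Fin d) (par : Fin d → Fin d) (anc : Fin d → Finset (Fin d))
    (hanc0 : anc r = ∅)
    (hanc : ∀ i, i ≠ r →
      anc i = insert i (anc (par i)) ∧ i ∉ anc (par i) ∧ r ∉ anc i)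
    (lamE : Fin d → ℝ → ℝ → ℝ)
    (hpos : ∀ i, i ≠ r → ∀ a b : ℝ, 0 < a → 0 < b → 0 < lamE i a b)
    (hcont : ∀ i, i ≠ r →
      ContinuousOn (fun p : ℝ × ℝ => lamE i p.1 p.2) {p | 0 < p.1 ∧ 0 < p.2})
    (hhom : ∀ i, i ≠ r → ∀ t a b : ℝ, 0 < t → 0 < a → 0 < b →
      lamE i (t * a) (t * b) = (t ^ 3)⁻¹ * lamE i a b)
    (hmarg1 : ∀ i, i ≠ r → ∀ a : ℝ, 0 < a →
      ∫ b in Ioi (0:ℝ), lamE i a b = (a ^ 2)⁻¹)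
    (hmarg2 : ∀ i, i ≠ r → ∀ b : ℝ, 0 < b →
      ∫ a in Ioi (0:ℝ), lamE i a b = (b ^ 2)⁻¹)
    (lam : (Fin d → ℝ) → ℝ)
    (hlamdef : ∀ y : Fin d → ℝ, (∀ j, 0 < y j) →
      lam y = (∏ i ∈ Finset.univ.erase r,
          (lamE i (y (par i)) (y i) / (((y (par i)) ^ 2)⁻¹ * ((y i) ^ 2)⁻¹))) *
        ∏ i : Fin d, ((y i) ^ 2)⁻¹) :
    (∀ i : Fin d,
      ∫ y in {y : Fin d → ℝ | (∀ j, 0 < y j) ∧ 1 < y i}, lam y = 1) ∧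
    (∀ t : ℝ, 0 < t → ∀ y : Fin d → ℝ, (∀ j, 0 < y j) →
      lam (t • y) = (t ^ (d + 1))⁻¹ * lam y) := by
  have hf : ∀ i, i ≠ r → ∀ a b : ℝ, 0 < a → 0 < b → 0 ≤ lamE i a b :=
    fun i hi a b ha hb ↦ (hpos i hi a b ha hb).le
  have hlam : ∀ y : Fin d → ℝ, (∀ j, 0 < y j) → lam y = treeDensity lamE par r y := hlamdef
  refine ⟨fun k ↦ ?_, fun t ht y hy ↦ ?_⟩
  · rw [setIntegral_congr_fun (measurableSet_pos_and_one_lt k) fun y hy ↦ hlam y hy.1]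
    exact setIntegral_treeDensity hanc0 hanc hf hmarg1 hmarg2 hcont k
  · rw [hlam (t • y) fun j ↦ mul_pos ht (hy j), hlam y hy, treeDensity_smul hhom ht hy,
      Fintype.card_fin]

/-- Gluing valid bivariate exponent measure densities along the
edges of a tree (rooted at `r`, edges `(par i, i)` for `i ≠ r`, with ancestor
sets `anc`) yields a function
`λ(y) = ∏_{{i,j}∈E} λ_{ij}(y_i,y_j)/(y_i⁻² y_j⁻²) · ∏_{i∈V} y_i⁻²` that is
homogeneous of order `-(d+1)` and has unit mass on each region `{y_i > 1}`. -/
theorem tree_glued_exponent_density_valid (d : ℕ) (hd : 1 ≤ d)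
    (r : Fin d) (par : Fin d → Fin d) (anc : Fin d → Finset (Fin d))
    (hpar : par r = r) (hanc0 : anc r = ∅)
    (hanc : ∀ i, i ≠ r →
      anc i = insert i (anc (par i)) ∧ i ∉ anc (par i) ∧ r ∉ anc i)
    (lamE : Fin d → ℝ → ℝ → ℝ)
    (hpos : ∀ i, i ≠ r → ∀ a b : ℝ, 0 < a → 0 < b → 0 < lamE i a b)
    (hcont : ∀ i, i ≠ r →
      ContinuousOn (fun p : ℝ × ℝ => lamE i p.1 p.2) {p | 0 < p.1 ∧ 0 < p.2})
    (hhom : ∀ i, i ≠ r → ∀ t a b : ℝ, 0 < t → 0 < a → 0 < b →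
      lamE i (t * a) (t * b) = (t ^ 3)⁻¹ * lamE i a b)
    (hmarg1 : ∀ i, i ≠ r → ∀ a : ℝ, 0 < a →
      ∫ b in Ioi (0:ℝ), lamE i a b = (a ^ 2)⁻¹)
    (hmarg2 : ∀ i, i ≠ r → ∀ b : ℝ, 0 < b →
      ∫ a in Ioi (0:ℝ), lamE i a b = (b ^ 2)⁻¹)
    (lam : (Fin d → ℝ) → ℝ)
    (hlamdef : ∀ y : Fin d → ℝ, (∀ j, 0 < y j) →
      lam y = (∏ i ∈ Finset.univ.erase r,
          (lamE i (y (par i)) (y i) / (((y (par i)) ^ 2)⁻¹ * ((y i) ^ 2)⁻¹))) *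
        ∏ i : Fin d, ((y i) ^ 2)⁻¹) :
    (∀ i : Fin d,
      ∫ y in {y : Fin d → ℝ | (∀ j, 0 < y j) ∧ 1 < y i}, lam y = 1) ∧
    (∀ t : ℝ, 0 < t → ∀ y : Fin d → ℝ, (∀ j, 0 < y j) →
      lam (t • y) = (t ^ (d + 1))⁻¹ * lam y) :=
  tree_glued_exponent_density_valid_general d r par anc hanc0 hanc lamE hpos hcont hhom hmarg1
    hmarg2 lam hlamdef
end

section
/- Let Γ^{(I)} be a variogram matrix (symmetric, zero diagonal, conditionally negative definite) on index set I and Γ^{(C)} one on index set C, with I ∩ C = {k₀}. Define Γ on I ∪ C by Γ_{ij} = Γ^{(I)}_{ij} for i,j ∈ I; Γ_{ij} = Γ^{(C)}_{ij} for i,j ∈ C; and Γ_{ij} = Γ^{(I)}_{i k₀} + Γ^{(C)}_{k₀ j} for i ∈ I \ {k₀}, j ∈ C \ {k₀} (and symmetrically). If Γ^{(I)} and Γ^{(C)} are strictly conditionally negative definite, then Γ is strictly conditionally negative definite. -/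
open Matrix

/-- Gluing two strictly conditionally negative definite variogram
matrices at a single common node `k₀` (here `Sum.inl ()`, with the remaining
indices of the two cliques given by types `α` and `β`) via
`Γ_{ij} = Γ^{(I)}_{i k₀} + Γ^{(C)}_{k₀ j}` for `i` and `j` in different cliques
yields a strictly conditionally negative definite variogram matrix. -/
theorem glued_variogram_scnd {α β : Type*} [Fintype α] [Fintype β]
    (ΓI : Matrix (Unit ⊕ α) (Unit ⊕ α) ℝ)
    (ΓC : Matrix (Unit ⊕ β) (Unit ⊕ β) ℝ)
    (hIsym : ΓI.IsSymm) (hCsym : ΓC.IsSymm)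
    (hIdiag : ∀ i, ΓI i i = 0) (hCdiag : ∀ i, ΓC i i = 0)
    (hIcnd : ∀ a : (Unit ⊕ α) → ℝ, a ≠ 0 → ∑ i, a i = 0 → a ⬝ᵥ ΓI.mulVec a < 0)
    (hCcnd : ∀ a : (Unit ⊕ β) → ℝ, a ≠ 0 → ∑ i, a i = 0 → a ⬝ᵥ ΓC.mulVec a < 0)
    (Γ : Matrix (Unit ⊕ α ⊕ β) (Unit ⊕ α ⊕ β) ℝ)
    (h00 : Γ (Sum.inl ()) (Sum.inl ()) = 0)
    (h0a : ∀ a, Γ (Sum.inl ()) (Sum.inr (Sum.inl a)) = ΓI (Sum.inl ()) (Sum.inr a))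
    (h0b : ∀ b, Γ (Sum.inl ()) (Sum.inr (Sum.inr b)) = ΓC (Sum.inl ()) (Sum.inr b))
    (ha0 : ∀ a, Γ (Sum.inr (Sum.inl a)) (Sum.inl ()) = ΓI (Sum.inr a) (Sum.inl ()))
    (hb0 : ∀ b, Γ (Sum.inr (Sum.inr b)) (Sum.inl ()) = ΓC (Sum.inr b) (Sum.inl ()))
    (haa : ∀ a a', Γ (Sum.inr (Sum.inl a)) (Sum.inr (Sum.inl a')) = ΓI (Sum.inr a) (Sum.inr a'))
    (hbb : ∀ b b', Γ (Sum.inr (Sum.inr b)) (Sum.inr (Sum.inr b')) = ΓC (Sum.inr b) (Sum.inr b'))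
    (hab : ∀ a b, Γ (Sum.inr (Sum.inl a)) (Sum.inr (Sum.inr b)) =
      ΓI (Sum.inr a) (Sum.inl ()) + ΓC (Sum.inl ()) (Sum.inr b))
    (hba : ∀ b a, Γ (Sum.inr (Sum.inr b)) (Sum.inr (Sum.inl a)) =
      ΓC (Sum.inr b) (Sum.inl ()) + ΓI (Sum.inl ()) (Sum.inr a)) :
    ∀ c : (Unit ⊕ α ⊕ β) → ℝ, c ≠ 0 → ∑ i, c i = 0 → c ⬝ᵥ Γ.mulVec c < 0 := by
  intro c hc hsum
  classical
  set c0 := c (Sum.inl ()) with hc0def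
  set sA := ∑ a, c (Sum.inr (Sum.inl a)) with hsA
  set sB := ∑ b, c (Sum.inr (Sum.inr b)) with hsB
  set u : (Unit ⊕ α) → ℝ := Sum.elim (fun _ => c0 + sB) (fun a => c (Sum.inr (Sum.inl a))) with hu
  set v : (Unit ⊕ β) → ℝ := Sum.elim (fun _ => c0 + sA) (fun b => c (Sum.inr (Sum.inr b))) with hv
  have hsum' : c0 + (sA + sB) = 0 := by
    simpa [Fintype.sum_sum_type] using hsum
  have hu_sum : ∑ i, u i = 0 := by
    simp [hu, Fintype.sum_sum_type, ← hsA]; linarith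
  have hv_sum : ∑ i, v i = 0 := by
    simp [hv, Fintype.sum_sum_type, ← hsB]; linarith
  have hd : (default : Unit) = () := rfl
  have key : c ⬝ᵥ Γ.mulVec c = u ⬝ᵥ ΓI.mulVec u + v ⬝ᵥ ΓC.mulVec v := by
    simp only [dotProduct, mulVec, Fintype.sum_sum_type, Finset.univ_unique,
      Finset.sum_singleton, hu, hv, Sum.elim_inl, Sum.elim_inr, hd,
      h00, h0a, h0b, ha0, hb0, haa, hbb, hab, hba, hIdiag, hCdiag]
    set P := ∑ x : α, ΓI (Sum.inl ()) (Sum.inr x) * c (Sum.inr (Sum.inl x)) with hP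
    set Q := ∑ x : β, ΓC (Sum.inl ()) (Sum.inr x) * c (Sum.inr (Sum.inr x)) with hQ
    have hQ1 : ∀ x : α, ∑ x1 : β,
        (ΓI (Sum.inr x) (Sum.inl ()) + ΓC (Sum.inl ()) (Sum.inr x1)) * c (Sum.inr (Sum.inr x1))
        = ΓI (Sum.inr x) (Sum.inl ()) * sB + Q := by
      intro x
      rw [hsB, hQ, Finset.mul_sum, ← Finset.sum_add_distrib]
      exact Finset.sum_congr rfl fun x1 _ => by ring
    have hP1 : ∀ x : β, ∑ x1 : α,
        (ΓC (Sum.inr x) (Sum.inl ()) + ΓI (Sum.inl ()) (Sum.inr x1)) * c (Sum.inr (Sum.inl x1))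
        = ΓC (Sum.inr x) (Sum.inl ()) * sA + P := by
      intro x
      rw [hsA, hP, Finset.mul_sum, ← Finset.sum_add_distrib]
      exact Finset.sum_congr rfl fun x1 _ => by ring
    have hA : ∑ x : α, c (Sum.inr (Sum.inl x)) *
        (ΓI (Sum.inr x) (Sum.inl ()) * c0 +
          (∑ x1 : α, ΓI (Sum.inr x) (Sum.inr x1) * c (Sum.inr (Sum.inl x1)) +
            ∑ x1 : β, (ΓI (Sum.inr x) (Sum.inl ()) + ΓC (Sum.inl ()) (Sum.inr x1)) *
              c (Sum.inr (Sum.inr x1))))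
        = (∑ x : α, c (Sum.inr (Sum.inl x)) *
            (ΓI (Sum.inr x) (Sum.inl ()) * (c0 + sB) +
              ∑ x1 : α, ΓI (Sum.inr x) (Sum.inr x1) * c (Sum.inr (Sum.inl x1)))) + sA * Q := by
      simp only [hQ1]
      rw [hsA, Finset.sum_mul, ← Finset.sum_add_distrib]
      exact Finset.sum_congr rfl fun x _ => by ring
    have hB : ∑ x : β, c (Sum.inr (Sum.inr x)) *
        (ΓC (Sum.inr x) (Sum.inl ()) * c0 +
          (∑ x1 : α, (ΓC (Sum.inr x) (Sum.inl ()) + ΓI (Sum.inl ()) (Sum.inr x1)) *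
              c (Sum.inr (Sum.inl x1)) +
            ∑ x1 : β, ΓC (Sum.inr x) (Sum.inr x1) * c (Sum.inr (Sum.inr x1))))
        = (∑ x : β, c (Sum.inr (Sum.inr x)) *
            (ΓC (Sum.inr x) (Sum.inl ()) * (c0 + sA) +
              ∑ x1 : β, ΓC (Sum.inr x) (Sum.inr x1) * c (Sum.inr (Sum.inr x1)))) + sB * P := by
      simp only [hP1]
      rw [hsB, Finset.sum_mul, ← Finset.sum_add_distrib]
      exact Finset.sum_congr rfl fun x _ => by ring
    rw [hA, hB]
    ring
  -- nonnegativity pieces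
  have huv : u ≠ 0 ∨ v ≠ 0 := by
    by_contra h
    push_neg at h
    obtain ⟨hu0, hv0⟩ := h
    apply hc
    have ha' : ∀ a, c (Sum.inr (Sum.inl a)) = 0 := fun a => by
      have := congrFun hu0 (Sum.inr a); simpa [hu] using this
    have hb' : ∀ b, c (Sum.inr (Sum.inr b)) = 0 := fun b => by
      have := congrFun hv0 (Sum.inr b); simpa [hv] using this
    have hsB0 : sB = 0 := by rw [hsB]; exact Finset.sum_eq_zero fun b _ => hb' b
    have hc00 : c0 = 0 := by
      have := congrFun hu0 (Sum.inl ()); simp [hu] at this; linarith [this, hsB0]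
    funext i
    rcases i with _ | (a | b)
    · simpa [hc0def] using hc00
    · exact ha' a
    · exact hb' b
  have hule : u ⬝ᵥ ΓI.mulVec u ≤ 0 := by
    rcases eq_or_ne u 0 with h | h
    · simp [h]
    · exact le_of_lt (hIcnd u h hu_sum)
  have hvle : v ⬝ᵥ ΓC.mulVec v ≤ 0 := by
    rcases eq_or_ne v 0 with h | h
    · simp [h]
    · exact le_of_lt (hCcnd v h hv_sum)
  rw [key]
  rcases huv with h | h
  · have := hIcnd u h hu_sum; linarith
  · have := hCcnd v h hv_sum; linarith
end
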